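/- arXiv:2106.08871 — 6 statements merged into one kernel-verified Lean document; each statement's English description precedes it below -/
import Mathlib

section
/- Let t ≥ 2 and q ≥ 2 be integers, let G be a finite t-broom-free graph, and let V_1, …, V_q be pairwise disjoint nonempty independent sets in G such that Q := G[V_1 ∪ ⋯ ∪ V_q] is a complete q-partite graph with parts V_1, …, V_q. Suppose that no vertex of N(V(Q)) is complete to V(Q). If R is a positive integer with the Ramsey property for (t, ω(G)), then every vertex of N^{≥2}(V(Q)) has fewer than 3R neighbors in N^{≥2}(V(Q)); that is, Δ(G[N^{≥2}(V(Q))]) < 3R. -/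
open SimpleGraph

/-- The `t`-broom: `K_{1,t+1}` with one edge subdivided once.
Vertex `0` is `u₀`, vertex `1` is `v₁`, vertex `2` is `v₂`,
and vertices `3, …, t+2` are `u₁, …, u_t`. -/
def tBroom (t : ℕ) : SimpleGraph (Fin (t + 3)) :=
  SimpleGraph.fromRel (fun a b =>
    (a = 0 ∧ b = 1) ∨ (a = 1 ∧ b = 2) ∨ (a = 0 ∧ 3 ≤ b.val))

/-- `G` is `H`-free: no induced subgraph of `G` is isomorphic to `H`.
(A graph embedding `H ↪g G` is exactly an isomorphism of `H` onto an induced subgraph of `G`.) -/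
def Free {V W : Type*} (G : SimpleGraph V) (H : SimpleGraph W) : Prop :=
  ¬ Nonempty (H ↪g G)

/-- The neighborhood `N(S)` of a set `S`: vertices outside `S` with a neighbor in `S`. -/
def nbhd {V : Type*} (G : SimpleGraph V) (S : Set V) : Set V :=
  {v | v ∉ S ∧ ∃ u ∈ S, G.Adj u v}

/-- `v` is complete to `S`: adjacent to every vertex of `S`. -/
def CompleteTo {V : Type*} (G : SimpleGraph V) (v : V) (S : Set V) : Prop :=
  ∀ u ∈ S, G.Adj v u

/-- `v` is anticomplete to `S`: adjacent to no vertex of `S`. -/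
def AnticompleteTo {V : Type*} (G : SimpleGraph V) (v : V) (S : Set V) : Prop :=
  ∀ u ∈ S, ¬ G.Adj v u

/-- `v` is neutral to `S`: neither complete nor anticomplete to `S`. -/
def NeutralTo {V : Type*} (G : SimpleGraph V) (v : V) (S : Set V) : Prop :=
  ¬ CompleteTo G v S ∧ ¬ AnticompleteTo G v S

/-- `S` is an independent set of size `s` in `G`. -/
def IsNIndepSet' {V : Type*} (G : SimpleGraph V) (s : ℕ) (S : Finset V) : Prop :=
  S.card = s ∧ ∀ u ∈ S, ∀ v ∈ S, u ≠ v → ¬ G.Adj u v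

/-- `R` has the Ramsey property for `(s, n)`: every finite simple graph on at least `R`
vertices contains an independent set of size `s` or a clique of size `n`. -/
def RamseyProp (R s n : ℕ) : Prop :=
  ∀ (W : Type) [Fintype W] (H : SimpleGraph W), R ≤ Fintype.card W →
    (∃ S : Finset W, IsNIndepSet' H s S) ∨ (∃ S : Finset W, H.IsNClique n S)

/-- The distance (in `ℕ∞`) from a set `S` to a vertex `v`:
the minimum over `u ∈ S` of the distance from `u` to `v`. -/
noncomputable def eDistSet {V : Type*} (G : SimpleGraph V) (S : Set V) (v : V) : ℕ∞ :=
  ⨅ u ∈ S, G.edist u v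

/-- `N^i(S)`: the set of vertices (outside `S`) at distance exactly `i` from `S`. -/
noncomputable def distNbhd {V : Type*} (G : SimpleGraph V) (S : Set V) (i : ℕ) : Set V :=
  {v | v ∉ S ∧ eDistSet G S v = (i : ℕ∞)}

/-- `N^{≥ i}(S) = ⋃_{j ≥ i} N^j(S)`. -/
noncomputable def distNbhdGe {V : Type*} (G : SimpleGraph V) (S : Set V) (i : ℕ) : Set V :=
  ⋃ j ∈ {j : ℕ | i ≤ j}, distNbhd G S j

/-- Given the union `U = V_1 ∪ ⋯ ∪ V_{q-1}` and the last part `Vq`, the set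
`W_I = {v ∈ W : v complete to I, anticomplete to U \ I}`, where
`W = {v ∈ N(U ∪ Vq) : v anticomplete to Vq}`. -/
def Wpart {V : Type*} (G : SimpleGraph V) (U Vq I : Set V) : Set V :=
  {v ∈ nbhd G (U ∪ Vq) | AnticompleteTo G v Vq ∧ CompleteTo G v I ∧
    AnticompleteTo G v (U \ I)}

/-!
If `w – a – b` is an induced path, fewer than `R` neighbours of `w` are distinct from and
nonadjacent to both `a` and `b`: by the Ramsey property, `R` of them would contain either `t`
pairwise nonadjacent vertices, which together with `w, a, b` form a `t`-broom, or an `ω(G)`-clique,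
which together with `w` is a larger clique.

Every vertex `w` at distance `k + 1 ≥ 1` from `S = V(Q)` starts such a path with `a, b` at distance
at most `k`, so that `a, b` are far from every vertex at distance `≥ k + 2`. For `k ≥ 1` take the
next two vertices of a shortest path to `S`. For `k = 0` the path lies in `Q`: `w` has a neighbour
`a ∈ S` and a non-neighbour `b ∈ S`, and if they lie in the same part, a vertex of another part
replaces one of them.

Now let `x` be at distance `d ≥ 2` from `S` and `x – p₁ – p₂ – p₃` a shortest path towards `S`. The
neighbours of `x` in `N^{≥2}(S)` lie at distance `≥ max(2, d - 1)` and split into three classes: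
those nonadjacent to `p₁` and `p₂` (use `x – p₁ – p₂`), those adjacent to `p₁` but not to `p₂` (use
`p₁ – p₂ – p₃`, or the path below `p₁` if `d = 2`), and those adjacent to `p₂` (use the path below
`p₂`; the class is empty if `d = 2`).
-/

def IsInducedP3 {V : Type*} (G : SimpleGraph V) (w a b : V) : Prop :=
  G.Adj w a ∧ G.Adj a b ∧ ¬ G.Adj w b ∧ w ≠ b

section Broom

variable {V : Type*} {G : SimpleGraph V} {w a b : V}

theorem IsInducedP3.nonempty_tBroom_embedding {t : ℕ} (h : IsInducedP3 G w a b) (u : Fin t ↪ V)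
    (hwu : ∀ i, G.Adj w (u i)) (hau : ∀ i, ¬ G.Adj a (u i) ∧ a ≠ u i)
    (hbu : ∀ i, ¬ G.Adj b (u i) ∧ b ≠ u i) (huu : Pairwise fun i j => ¬ G.Adj (u i) (u j)) :
    Nonempty (tBroom t ↪g G) := by
  obtain ⟨hwa, hab, hwb, hwb'⟩ := h
  have huu' : ∀ i j, ¬ G.Adj (u i) (u j) := fun i j hij =>
    if h : i = j then G.irrefl (h ▸ hij) else huu h hij
  refine ⟨⟨⟨Fin.cons w (Fin.cons a (Fin.cons b u)), ?_⟩, ?_⟩⟩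
  · simp only [Fin.cons_injective_iff, Set.mem_range, Fin.exists_fin_succ, Fin.cons_zero,
      Fin.cons_succ, u.injective, not_exists, not_or]
    exact ⟨⟨hwa.ne.symm, hwb'.symm, fun i => (hwu i).ne.symm⟩,
      ⟨hab.ne.symm, fun i => (hau i).2.symm⟩, fun i => (hbu i).2.symm, trivial⟩
  · simp only [Function.Embedding.coeFn_mk, Fin.forall_fin_succ, Fin.cons_zero, Fin.cons_succ,
      tBroom, fromRel_adj, ne_eq, Fin.ext_iff, Fin.val_succ, Fin.val_zero]
    simp [hwa, hab, hwb, hwa.symm, hab.symm, hwu, (hwu _).symm, hau, hbu, huu', G.adj_comm _ w,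
      G.adj_comm _ a, G.adj_comm _ b, Nat.mod_eq_of_lt (by omega : 2 < t + 3)]

end Broom

section Star

variable {V : Type} [Fintype V] {G : SimpleGraph V} {t R : ℕ} {w a b : V}

theorem IsInducedP3.ncard_lt (hfree : _root_.Free G (tBroom t))
    (hRam : RamseyProp R t G.cliqueNum) (h : IsInducedP3 G w a b) {A : Set V}
    (hwA : ∀ y ∈ A, G.Adj w y) (haA : ∀ y ∈ A, ¬ G.Adj a y ∧ a ≠ y)
    (hbA : ∀ y ∈ A, ¬ G.Adj b y ∧ b ≠ y) : A.ncard < R := by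
  classical
  by_contra! hle
  rw [← Nat.card_coe_set_eq, Nat.card_eq_fintype_card] at hle
  rcases hRam A (G.induce A) hle with ⟨T, hTcard, hTind⟩ | ⟨T, hT⟩
  · let u : Fin t ↪ V := (T.equivFinOfCardEq hTcard).symm.toEmbedding.trans
      ((Function.Embedding.subtype _).trans (Function.Embedding.subtype _))
    have hu : ∀ i, u i ∈ A := fun i => ((T.equivFinOfCardEq hTcard).symm i).1.2
    refine hfree (h.nonempty_tBroom_embedding u (fun i => hwA _ (hu i))
      (fun i => haA _ (hu i)) (fun i => hbA _ (hu i)) fun i j hij => ?_)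
    exact hTind _ (Subtype.prop _) _ (Subtype.prop _)
      (fun he => hij ((T.equivFinOfCardEq hTcard).symm.injective (Subtype.ext he)))
  · rw [isNClique_induce_iff] at hT
    have hwT : G.IsNClique (G.cliqueNum + 1) (insert w (T.map (.subtype _))) :=
      hT.insert fun y hy => hwA y (by obtain ⟨y, -, rfl⟩ := Finset.mem_map.mp hy; exact y.2)
    have := hwT.isClique.card_le_cliqueNum (G := G)
    rw [hwT.card_eq] at this
    omega

end Star

section Distance

variable {V : Type*} {G : SimpleGraph V} {S : Set V} {u v w y z : V}

theorem eDistSet_le_edist (hu : u ∈ S) : eDistSet G S v ≤ G.edist u v := iInf₂_le u hu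

theorem exists_edist_eq_of_eDistSet_eq {m : ℕ} (h : eDistSet G S v = m) :
    ∃ u ∈ S, G.edist u v = m := by
  have hlt : eDistSet G S v < m + 1 := by
    rw [h]; exact_mod_cast Nat.lt_succ_self m
  simp only [eDistSet, iInf_lt_iff] at hlt
  obtain ⟨u, hu, hlt⟩ := hlt
  exact ⟨u, hu, le_antisymm (Order.le_of_lt_add_one hlt) (h ▸ eDistSet_le_edist hu)⟩

theorem eDistSet_eq_zero_iff : eDistSet G S v = 0 ↔ v ∈ S := by
  refine ⟨fun h => ?_, fun hv => nonpos_iff_eq_zero.mp ?_⟩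
  · obtain ⟨u, hu, huv⟩ := exists_edist_eq_of_eDistSet_eq (m := 0) h
    exact edist_eq_zero_iff.mp huv ▸ hu
  · simpa using eDistSet_le_edist (G := G) (v := v) hv

theorem eDistSet_le_add_one_of_adj (h : G.Adj u v) : eDistSet G S v ≤ eDistSet G S u + 1 := by
  by_cases hu : eDistSet G S u = ⊤
  · simp [hu]
  obtain ⟨m, hm⟩ := ENat.ne_top_iff_exists.mp hu
  obtain ⟨s, hs, hsu⟩ := exists_edist_eq_of_eDistSet_eq hm.symm
  calc eDistSet G S v ≤ G.edist s v := eDistSet_le_edist hs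
    _ ≤ G.edist s u + G.edist u v := SimpleGraph.edist_triangle
    _ = eDistSet G S u + 1 := by rw [hsu, ← hm, edist_eq_one_iff_adj.mpr h]

theorem le_eDistSet_of_adj {j : ℕ} (h : G.Adj u v) (hu : eDistSet G S u = (j + 1 : ℕ)) :
    (j : ℕ∞) ≤ eDistSet G S v := by
  have := hu ▸ eDistSet_le_add_one_of_adj (S := S) h.symm
  rwa [Nat.cast_add, Nat.cast_one, ENat.add_le_add_iff_right ENat.one_ne_top] at this

theorem exists_adj_eDistSet_eq_of_eDistSet_eq_succ {j : ℕ} (h : eDistSet G S v = (j + 1 : ℕ)) :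
    ∃ w, G.Adj v w ∧ eDistSet G S w = j := by
  obtain ⟨u, hu, huv⟩ := exists_edist_eq_of_eDistSet_eq h
  obtain ⟨p, hp⟩ := exists_walk_of_edist_eq_coe (edist_comm.trans huv)
  cases p with
  | nil => simp at hp
  | @cons _ w _ hvw q =>
    refine ⟨w, hvw, le_antisymm ?_ ?_⟩
    · calc eDistSet G S w ≤ G.edist u w := eDistSet_le_edist hu
        _ = G.edist w u := edist_comm
        _ ≤ q.length := edist_le q
        _ = j := by simp_all
    · exact le_eDistSet_of_adj hvw h

theorem not_adj_and_ne_of_eDistSet_add_two_le {m : ℕ} (hz : eDistSet G S z ≤ m)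
    (hy : ((m + 2 : ℕ) : ℕ∞) ≤ eDistSet G S y) : ¬ G.Adj z y ∧ z ≠ y := by
  refine ⟨fun hzy => ?_, ?_⟩
  · have : ((m + 2 : ℕ) : ℕ∞) ≤ (m + 1 : ℕ) :=
      hy.trans ((eDistSet_le_add_one_of_adj hzy).trans (by push_cast; gcongr))
    norm_cast at this
    omega
  · rintro rfl
    have : ((m + 2 : ℕ) : ℕ∞) ≤ m := hy.trans hz
    norm_cast at this
    omega

theorem isInducedP3_of_eDistSet_eq {k : ℕ} (hwu : G.Adj w u) (huv : G.Adj u v)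
    (hw : eDistSet G S w = (k + 2 : ℕ)) (hv : eDistSet G S v = k) : IsInducedP3 G w u v :=
  have := not_adj_and_ne_of_eDistSet_add_two_le hv.le hw.ge
  ⟨hwu, huv, fun h => this.1 h.symm, this.2.symm⟩

theorem mem_nbhd_of_eDistSet_eq_one (h : eDistSet G S v = 1) : v ∈ nbhd G S := by
  obtain ⟨u, hvu, hu⟩ := exists_adj_eDistSet_eq_of_eDistSet_eq_succ (j := 0) (by simpa using h)
  refine ⟨fun hv => ?_, u, eDistSet_eq_zero_iff.mp (by simpa using hu), hvu.symm⟩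
  simp [eDistSet_eq_zero_iff.mpr hv] at h

theorem exists_eDistSet_eq_of_mem_distNbhdGe {i : ℕ} (h : v ∈ distNbhdGe G S i) :
    ∃ j, i ≤ j ∧ eDistSet G S v = j := by
  simp only [distNbhdGe, distNbhd, Set.mem_iUnion, Set.mem_ofPred_eq] at h
  obtain ⟨j, hj, -, hv⟩ := h
  exact ⟨j, hj, hv⟩

end Distance

theorem exists_isInducedP3_of_mem_nbhd {V : Type*} {G : SimpleGraph V} {q : ℕ} (hq : 2 ≤ q)
    {Vs : Fin q → Set V} (hne : ∀ i, (Vs i).Nonempty)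
    (hcomp : ∀ i j, i ≠ j → ∀ u ∈ Vs i, ∀ w ∈ Vs j, G.Adj u w) {w : V}
    (hw : w ∈ nbhd G (⋃ i, Vs i)) (hnc : ¬ CompleteTo G w (⋃ i, Vs i)) :
    ∃ a ∈ ⋃ i, Vs i, ∃ b ∈ ⋃ i, Vs i, IsInducedP3 G w a b := by
  obtain ⟨hwS, z, hzS, hzw⟩ := hw
  obtain ⟨b, hbS, hwb⟩ : ∃ b ∈ ⋃ i, Vs i, ¬ G.Adj w b := by
    simpa [CompleteTo] using hnc
  have hne_of_mem : ∀ c ∈ ⋃ i, Vs i, w ≠ c := fun c hc he => hwS (he ▸ hc)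
  obtain ⟨i, hzi⟩ := Set.mem_iUnion.mp hzS
  obtain ⟨i', hbi⟩ := Set.mem_iUnion.mp hbS
  by_cases hii : i = i'
  · subst hii
    have : Nontrivial (Fin q) := Fin.nontrivial_iff_two_le.mpr hq
    obtain ⟨j, hj⟩ := exists_ne i
    obtain ⟨c, hc⟩ := hne j
    have hcS : c ∈ ⋃ i, Vs i := Set.mem_iUnion.mpr ⟨j, hc⟩
    by_cases hwc : G.Adj w c
    · exact ⟨c, hcS, b, hbS, hwc, hcomp j i hj c hc b hbi, hwb, hne_of_mem b hbS⟩
    · exact ⟨z, hzS, c, hcS, hzw.symm, hcomp i j (Ne.symm hj) z hzi c hc, hwc, hne_of_mem c hcS⟩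
  · exact ⟨z, hzS, b, hbS, hzw.symm, hcomp i i' hii z hzi b hbi, hwb, hne_of_mem b hbS⟩

theorem exists_isInducedP3_eDistSet_le {V : Type*} {G : SimpleGraph V} {S : Set V}
    (hP3 : ∀ w ∈ nbhd G S, ∃ a ∈ S, ∃ b ∈ S, IsInducedP3 G w a b)
    {w : V} {k : ℕ} (hw : eDistSet G S w = (k + 1 : ℕ)) :
    ∃ a b, IsInducedP3 G w a b ∧ eDistSet G S a ≤ k ∧ eDistSet G S b ≤ k := by
  cases k with
  | zero =>
    obtain ⟨a, ha, b, hb, hP⟩ := hP3 w (mem_nbhd_of_eDistSet_eq_one (by simpa using hw))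
    exact ⟨a, b, hP, by simp [eDistSet_eq_zero_iff.mpr ha], by simp [eDistSet_eq_zero_iff.mpr hb]⟩
  | succ j =>
    obtain ⟨a, hwa, ha⟩ := exists_adj_eDistSet_eq_of_eDistSet_eq_succ hw
    obtain ⟨b, hab, hb⟩ := exists_adj_eDistSet_eq_of_eDistSet_eq_succ ha
    exact ⟨a, b, isInducedP3_of_eDistSet_eq hwa hab hw hb, ha.le, hb.le.trans (by gcongr; omega)⟩

section Degree

variable {V : Type} [Fintype V] {G : SimpleGraph V} {S : Set V} {t R : ℕ}

theorem ncard_lt_of_forall_adj_of_add_one_le_eDistSet (hR : 0 < R)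
    (hfree : _root_.Free G (tBroom t)) (hRam : RamseyProp R t G.cliqueNum)
    (hP3 : ∀ w ∈ nbhd G S, ∃ a ∈ S, ∃ b ∈ S, IsInducedP3 G w a b)
    {w : V} {n : ℕ} (hw : eDistSet G S w = n) {A : Set V}
    (hA : ∀ y ∈ A, G.Adj w y ∧ ((n + 1 : ℕ) : ℕ∞) ≤ eDistSet G S y ∧ 2 ≤ eDistSet G S y) :
    A.ncard < R := by
  cases n with
  | zero =>
    have hempty : A = ∅ := Set.eq_empty_of_forall_notMem fun y hy =>
      (not_adj_and_ne_of_eDistSet_add_two_le (m := 0) hw.le (by simpa using (hA y hy).2.2)).1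
        (hA y hy).1
    rwa [hempty, Set.ncard_empty]
  | succ k =>
    obtain ⟨a, b, hP, ha, hb⟩ := exists_isInducedP3_eDistSet_le hP3 hw
    exact hP.ncard_lt hfree hRam (fun y hy => (hA y hy).1)
      (fun y hy => not_adj_and_ne_of_eDistSet_add_two_le ha (hA y hy).2.1)
      (fun y hy => not_adj_and_ne_of_eDistSet_add_two_le hb (hA y hy).2.1)

theorem ncard_adj_distNbhdGe_two_lt (hR : 0 < R) (hfree : _root_.Free G (tBroom t))
    (hRam : RamseyProp R t G.cliqueNum)
    (hP3 : ∀ w ∈ nbhd G S, ∃ a ∈ S, ∃ b ∈ S, IsInducedP3 G w a b)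
    {x : V} (hx : x ∈ distNbhdGe G S 2) :
    {y ∈ distNbhdGe G S 2 | G.Adj x y}.ncard < 3 * R := by
  obtain ⟨d, hd, hxd⟩ := exists_eDistSet_eq_of_mem_distNbhdGe hx
  obtain ⟨n, rfl⟩ := Nat.exists_eq_add_of_le' hd
  obtain ⟨p₁, hxp₁, hp₁⟩ := exists_adj_eDistSet_eq_of_eDistSet_eq_succ hxd
  obtain ⟨p₂, hp₁₂, hp₂⟩ := exists_adj_eDistSet_eq_of_eDistSet_eq_succ hp₁
  have hxP3 := isInducedP3_of_eDistSet_eq hxp₁ hp₁₂ hxd hp₂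
  set D := {y ∈ distNbhdGe G S 2 | G.Adj x y}
  have hD : ∀ y ∈ D, G.Adj x y ∧ ((n + 1 : ℕ) : ℕ∞) ≤ eDistSet G S y ∧ 2 ≤ eDistSet G S y := by
    rintro y ⟨hy, hxy⟩
    obtain ⟨j, hj, hyj⟩ := exists_eDistSet_eq_of_mem_distNbhdGe hy
    exact ⟨hxy, le_eDistSet_of_adj hxy hxd, hyj ▸ by exact_mod_cast hj⟩
  have hC : {y ∈ D | ¬ G.Adj p₁ y ∧ ¬ G.Adj p₂ y}.ncard < R :=
    hxP3.ncard_lt hfree hRam (fun y hy => (hD y hy.1).1)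
      (fun y hy => ⟨hy.2.1, by rintro rfl; exact hy.2.2 hp₁₂.symm⟩)
      (fun y hy => ⟨hy.2.2, by rintro rfl; exact hxP3.2.2.1 hy.1.2⟩)
  have hA : {y ∈ D | G.Adj p₁ y ∧ ¬ G.Adj p₂ y}.ncard < R := by
    cases n with
    | zero =>
      exact ncard_lt_of_forall_adj_of_add_one_le_eDistSet hR hfree hRam hP3 hp₁ fun y hy =>
        ⟨hy.2.1, (hD y hy.1).2.2, (hD y hy.1).2.2⟩
    | succ m =>
      obtain ⟨p₃, hp₂₃, hp₃⟩ := exists_adj_eDistSet_eq_of_eDistSet_eq_succ hp₂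
      exact (isInducedP3_of_eDistSet_eq hp₁₂ hp₂₃ hp₁ hp₃).ncard_lt hfree hRam
        (fun y hy => hy.2.1) (fun y hy => ⟨hy.2.2, by rintro rfl; exact hxP3.2.2.1 hy.1.2⟩)
        (fun y hy => not_adj_and_ne_of_eDistSet_add_two_le hp₃.le (hD y hy.1).2.1)
  have hB : {y ∈ D | G.Adj p₂ y}.ncard < R :=
    ncard_lt_of_forall_adj_of_add_one_le_eDistSet hR hfree hRam hP3 hp₂
      fun y hy => ⟨hy.2, (hD y hy.1).2⟩
  have hsplit : D ⊆ {y ∈ D | ¬ G.Adj p₁ y ∧ ¬ G.Adj p₂ y} ∪ {y ∈ D | G.Adj p₁ y ∧ ¬ G.Adj p₂ y} ∪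
      {y ∈ D | G.Adj p₂ y} := by
    intro y hy
    simp only [Set.mem_union, Set.mem_sep_iff]
    tauto
  calc D.ncard ≤ _ := Set.ncard_le_ncard hsplit (Set.toFinite _)
    _ ≤ _ := (Set.ncard_union_le _ _).trans (add_le_add_left (Set.ncard_union_le _ _) _)
    _ < 3 * R := by omega

end Degree

theorem maxDegree_distGeTwo_lt_general (t q : ℕ) (hq : 2 ≤ q)
    (V : Type) [Fintype V] (G : SimpleGraph V) (hfree : _root_.Free G (tBroom t))
    (Vs : Fin q → Set V)
    (hne : ∀ i, (Vs i).Nonempty)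
    (hcomp : ∀ i j, i ≠ j → ∀ u ∈ Vs i, ∀ w ∈ Vs j, G.Adj u w)
    (hnotfull : ∀ x ∈ nbhd G (⋃ i, Vs i), ¬ CompleteTo G x (⋃ i, Vs i))
    (R : ℕ) (hR : 0 < R) (hRam : RamseyProp R t G.cliqueNum) :
    ∀ x ∈ distNbhdGe G (⋃ i, Vs i) 2,
      ({y ∈ distNbhdGe G (⋃ i, Vs i) 2 | G.Adj x y}).ncard < 3 * R :=
  fun _ hx => ncard_adj_distNbhdGe_two_lt hR hfree hRam
    (fun w hw => exists_isInducedP3_of_mem_nbhd hq hne hcomp hw (hnotfull w hw)) hx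

/-- Lemma 2.1. Let `t, q ≥ 2`, let `G` be a finite `t`-broom-free graph and
`V_1, …, V_q` pairwise disjoint nonempty independent sets such that `Q = G[V_1 ∪ ⋯ ∪ V_q]` is
complete `q`-partite with parts `V_1, …, V_q`.  If no vertex of `N(V(Q))` is complete to `V(Q)`
and `R` has the Ramsey property for `(t, ω(G))`, then every vertex of `N^{≥2}(V(Q))` has fewer
than `3R` neighbors in `N^{≥2}(V(Q))`. -/
theorem maxDegree_distGeTwo_lt (t q : ℕ) (ht : 2 ≤ t) (hq : 2 ≤ q)
    (V : Type) [Fintype V] (G : SimpleGraph V) (hfree : _root_.Free G (tBroom t))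
    (Vs : Fin q → Set V)
    (hne : ∀ i, (Vs i).Nonempty)
    (hdisj : ∀ i j, i ≠ j → Disjoint (Vs i) (Vs j))
    (hindep : ∀ i, ∀ u ∈ Vs i, ∀ w ∈ Vs i, ¬ G.Adj u w)
    (hcomp : ∀ i j, i ≠ j → ∀ u ∈ Vs i, ∀ w ∈ Vs j, G.Adj u w)
    (hnotfull : ∀ x ∈ nbhd G (⋃ i, Vs i), ¬ CompleteTo G x (⋃ i, Vs i))
    (R : ℕ) (hR : 0 < R) (hRam : RamseyProp R t G.cliqueNum) :
    ∀ x ∈ distNbhdGe G (⋃ i, Vs i) 2,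
      ({y ∈ distNbhdGe G (⋃ i, Vs i) 2 | G.Adj x y}).ncard < 3 * R :=
  maxDegree_distGeTwo_lt_general t q hq V G hfree Vs hne hcomp hnotfull R hR hRam
end

section
/- Let t ≥ 2 and q ≥ 2 be integers, let G be a finite t-broom-free graph, and let V_1, …, V_q be pairwise disjoint nonempty independent sets in G with |V_q| = t such that Q := G[V_1 ∪ ⋯ ∪ V_q] is a complete q-partite graph with parts V_1, …, V_q. Let W = {v ∈ N(V(Q)) : v is anticomplete to V_q}, and for each I ⊆ V_1 ∪ ⋯ ∪ V_{q-1} let W_I = {v ∈ W : v is complete to I and anticomplete to (V_1 ∪ ⋯ ∪ V_{q-1}) \ I}. Then for any two distinct subsets I, I' of V_1 ∪ ⋯ ∪ V_{q-1}, the set W_I is anticomplete to W_{I'}. -/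
open SimpleGraph

/-! If `x ∈ I \ I'` and `w ∈ W_I`, `w' ∈ W_{I'}` were adjacent, then `x - w - w'` would be an
induced path whose end `x` lies in `V_1 ∪ ⋯ ∪ V_{q-1}`, hence is complete to `V_q`, while `w` and
`w'` are anticomplete to `V_q`. Since `V_q` is an independent set of size `t`, the vertices
`x, w, w'` together with `V_q` induce a `t`-broom. -/

section Broom

variable {V : Type*} {G : SimpleGraph V}

lemma not_free_tBroom {t : ℕ} {x a b : V} {e : Fin t → V} (he : e.Injective)
    (hxa : G.Adj x a) (hab : G.Adj a b) (hxb : ¬ G.Adj x b) (hxb_ne : x ≠ b)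
    (hxe : ∀ i, G.Adj x (e i)) (hae : ∀ i, ¬ G.Adj a (e i)) (hbe : ∀ i, ¬ G.Adj b (e i))
    (hea : ∀ i, e i ≠ a) (heb : ∀ i, e i ≠ b) (hee : ∀ i j, ¬ G.Adj (e i) (e j)) :
    ¬ _root_.Free G (tBroom t) := by
  refine not_not.2 ⟨⟨⟨Fin.cons x (Fin.cons a (Fin.cons b e)), ?_⟩, ?_⟩⟩
  · simp [Fin.cons_injective_iff, he, hxa.ne, hab.ne, hxb_ne, heb, hea, fun i => (hxe i).ne']
  · have hbx : ¬ G.Adj b x := fun h => hxb h.symm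
    have hea' : ∀ i, ¬ G.Adj (e i) a := fun i h => hae i h.symm
    have heb' : ∀ i, ¬ G.Adj (e i) b := fun i h => hbe i h.symm
    have h2 : 2 % (t + 3) = 2 := Nat.mod_eq_of_lt (by omega)
    intro i j
    refine Fin.cases ?_ (Fin.cases ?_ (Fin.cases ?_ fun i => ?_)) i <;>
    refine Fin.cases ?_ (Fin.cases ?_ (Fin.cases ?_ fun j => ?_)) j <;>
    simp only [Function.Embedding.coeFn_mk, Fin.cons_zero, Fin.cons_succ, tBroom, fromRel_adj,
      ne_eq, Fin.ext_iff, Fin.val_succ, Fin.val_zero] <;>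
    simp [hxa, hab, hxb, hxe, hae, hbe, hee, hxa.symm, hab.symm, fun i => (hxe i).symm, hbx,
      hea', heb', h2]

lemma adj_of_free_tBroom {t : ℕ} (hfree : _root_.Free G (tBroom t)) {S : Set V}
    (hS : S.ncard = t) (hSind : G.IsIndepSet S) {x a b : V} (hxS : CompleteTo G x S)
    (haS : AnticompleteTo G a S) (hbS : AnticompleteTo G b S) (ha : a ∉ S) (hb : b ∉ S)
    (hxa : G.Adj x a) (hab : G.Adj a b) (hxb : x ≠ b) : G.Adj x b := by
  obtain ⟨e, -⟩ := Fin.Embedding.exists_embedding_disjoint_range_of_add_le_ENat_card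
    (α := S) (s := ∅) (n := t) (by simpa [← hS] using S.ncard_le_encard)
  have he : ∀ i, (e i : V) ∈ S := fun i => (e i).2
  by_contra hxb'
  exact not_free_tBroom (e := fun i => (e i : V)) (Subtype.val_injective.comp e.injective)
    hxa hab hxb' hxb (fun i => hxS _ (he i)) (fun i => haS _ (he i)) (fun i => hbS _ (he i))
    (fun i h => ha (h ▸ he i)) (fun i h => hb (h ▸ he i))
    (fun i j h => hSind (he i) (he j) h.ne h) hfree

lemma not_adj_of_mem_Wpart {t : ℕ} (hfree : _root_.Free G (tBroom t)) {U Vq I I' : Set V}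
    (hVq : Vq.ncard = t) (hVq_ind : G.IsIndepSet Vq) {x : V} (hxU : x ∈ U) (hxI : x ∈ I)
    (hxI' : x ∉ I') (hxVq : CompleteTo G x Vq) {w w' : V} (hw : w ∈ Wpart G U Vq I)
    (hw' : w' ∈ Wpart G U Vq I') : ¬ G.Adj w w' := by
  obtain ⟨⟨hwQ, -⟩, hwVq, hwI, -⟩ := hw
  obtain ⟨⟨hw'Q, -⟩, hw'Vq, -, hw'U⟩ := hw'
  intro hww'
  have hxw' : x ≠ w' := fun h => hw'Q (Or.inl (h ▸ hxU))
  exact hw'U x ⟨hxU, hxI'⟩ (adj_of_free_tBroom hfree hVq hVq_ind hxVq hwVq hw'Vq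
    (fun h => hwQ (Or.inr h)) (fun h => hw'Q (Or.inr h)) (hwI x hxI).symm hww' hxw').symm

end Broom

theorem Wparts_anticomplete_general (t q : ℕ)
    (V : Type) (G : SimpleGraph V) (hfree : _root_.Free G (tBroom t))
    (Vs : Fin (q - 1) → Set V) (Vq : Set V)
    (hVq : Vq.ncard = t)
    (hindepq : ∀ u ∈ Vq, ∀ w ∈ Vq, ¬ G.Adj u w)
    (hcompq : ∀ i, ∀ u ∈ Vs i, ∀ w ∈ Vq, G.Adj u w) :
    ∀ I I' : Set V, I ⊆ (⋃ i, Vs i) → I' ⊆ (⋃ i, Vs i) → I ≠ I' →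
      ∀ w ∈ Wpart G (⋃ i, Vs i) Vq I, ∀ w' ∈ Wpart G (⋃ i, Vs i) Vq I',
        ¬ G.Adj w w' := by
  intro I I' hI hI' hII' w hw w' hw'
  have hVq_ind : G.IsIndepSet Vq := fun u hu v hv _ => hindepq u hu v hv
  have hcomplete : ∀ x ∈ ⋃ i, Vs i, CompleteTo G x Vq := fun x hx => by
    obtain ⟨i, hxi⟩ := Set.mem_iUnion.1 hx
    exact hcompq i x hxi
  obtain ⟨x, ⟨hxI, hxI'⟩ | ⟨hxI', hxI⟩⟩ := Set.symmDiff_nonempty.2 hII'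
  · exact not_adj_of_mem_Wpart hfree hVq hVq_ind (hI hxI) hxI hxI' (hcomplete x (hI hxI)) hw hw'
  · exact fun h => not_adj_of_mem_Wpart hfree hVq hVq_ind (hI' hxI') hxI' hxI
      (hcomplete x (hI' hxI')) hw' hw h.symm

/-- Lemma 2.2(i). With `Q = G[V_1 ∪ ⋯ ∪ V_q]` complete `q`-partite,
`|V_q| = t`, and `W = {v ∈ N(V(Q)) : v anticomplete to V_q}`, the sets
`W_I` and `W_{I'}` are anticomplete to each other for distinct `I, I' ⊆ V_1 ∪ ⋯ ∪ V_{q-1}`. -/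
theorem Wparts_anticomplete (t q : ℕ) (ht : 2 ≤ t) (hq : 2 ≤ q)
    (V : Type) [Fintype V] (G : SimpleGraph V) (hfree : _root_.Free G (tBroom t))
    (Vs : Fin (q - 1) → Set V) (Vq : Set V)
    (hne : ∀ i, (Vs i).Nonempty) (hVq : Vq.ncard = t)
    (hdisj : ∀ i j, i ≠ j → Disjoint (Vs i) (Vs j))
    (hdisjq : ∀ i, Disjoint (Vs i) Vq)
    (hindep : ∀ i, ∀ u ∈ Vs i, ∀ w ∈ Vs i, ¬ G.Adj u w)
    (hindepq : ∀ u ∈ Vq, ∀ w ∈ Vq, ¬ G.Adj u w)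
    (hcomp : ∀ i j, i ≠ j → ∀ u ∈ Vs i, ∀ w ∈ Vs j, G.Adj u w)
    (hcompq : ∀ i, ∀ u ∈ Vs i, ∀ w ∈ Vq, G.Adj u w) :
    ∀ I I' : Set V, I ⊆ (⋃ i, Vs i) → I' ⊆ (⋃ i, Vs i) → I ≠ I' →
      ∀ w ∈ Wpart G (⋃ i, Vs i) Vq I, ∀ w' ∈ Wpart G (⋃ i, Vs i) Vq I',
        ¬ G.Adj w w' :=
  Wparts_anticomplete_general t q V G hfree Vs Vq hVq hindepq hcompq
end

section
/- Let t ≥ 2 and q ≥ 2 be integers, let G be a finite t-broom-free graph, and let V_1, …, V_q be pairwise disjoint nonempty independent sets in G with |V_q| = t such that Q := G[V_1 ∪ ⋯ ∪ V_q] is a complete q-partite graph with parts V_1, …, V_q. Let Z = {v ∈ N(V(Q)) : v is complete to V_q}, let W = {v ∈ N(V(Q)) : v is anticomplete to V_q}, and for each I ⊆ V_1 ∪ ⋯ ∪ V_{q-1} let W_I = {v ∈ W : v is complete to I and anticomplete to (V_1 ∪ ⋯ ∪ V_{q-1}) \ I}. Then for every z ∈ Z, every I ⊆ V_1 ∪ ⋯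 ∪ V_{q-1}, and every connected component X_I of G[W_I], the vertex z is either complete to V(X_I) or anticomplete to V(X_I). -/
open SimpleGraph

/-!
If `z` were neutral to a component `X_I` of `G[W_I]`, walking inside `X_I` from a neighbour of `z`
to a non-neighbour would cross an edge `xy` with `z ~ x` and `z ≁ y`. As `x, y ∈ W` are
anticomplete to `V_q` while `z` is complete to it, `z` together with the path `z x y` and the `t`
vertices of `V_q` would induce a `t`-broom centred at `z`.
-/

lemma tBroom_adj {t : ℕ} {a b : Fin (t + 3)} :
    (tBroom t).Adj a b ↔ a ≠ b ∧
      ((a.val = 0 ∧ b.val = 1) ∨ (a.val = 1 ∧ b.val = 2) ∨ (a.val = 0 ∧ 3 ≤ b.val) ∨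
        (b.val = 0 ∧ a.val = 1) ∨ (b.val = 1 ∧ a.val = 2) ∨ (b.val = 0 ∧ 3 ≤ a.val)) := by
  simp only [tBroom, fromRel_adj, Fin.ext_iff, Fin.val_zero, Fin.val_one, Fin.val_two]
  tauto

lemma nonempty_tBroom_embedding_of_adj {V : Type*} {G : SimpleGraph V} {t : ℕ} (ht : t ≠ 0)
    {z w w' : V} (u : Fin t ↪ V) (hzw : G.Adj z w) (hww' : G.Adj w w') (hzw' : ¬ G.Adj z w')
    (hz : ∀ i, G.Adj z (u i)) (hw : ∀ i, ¬ G.Adj w (u i)) (hw' : ∀ i, ¬ G.Adj w' (u i))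
    (hu : ∀ i j, ¬ G.Adj (u i) (u j)) :
    Nonempty (tBroom t ↪g G) := by
  let f : Fin (t + 3) → V := Fin.cons z (Fin.cons w (Fin.cons w' u))
  have hf_inj : Function.Injective f := by
    have i₀ : Fin t := ⟨0, Nat.pos_of_ne_zero ht⟩
    simp only [f, Fin.cons_injective_iff, Set.mem_range, Fin.exists_fin_succ, Fin.cons_zero,
      Fin.cons_succ, not_or, not_exists]
    exact ⟨⟨hzw.ne', fun h => hw' i₀ (h ▸ hz i₀), fun i h => G.irrefl (h ▸ hz i)⟩,
      ⟨hww'.ne', fun i h => hw' i (h ▸ hww'.symm)⟩, fun i h => hw i (h ▸ hww'), u.injective⟩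
  have hf_adj : ∀ a b, G.Adj (f a) (f b) ↔ (tBroom t).Adj a b := by
    simp only [f, Fin.forall_fin_succ, Fin.cons_zero, Fin.cons_succ, tBroom_adj, Fin.val_succ,
      Fin.val_zero, ne_eq, Fin.ext_iff]
    simp [hzw, hww', hzw', hz, hw, hw', hu, hzw.symm, hww'.symm, G.adj_comm w' z,
      G.adj_comm (u _) z, G.adj_comm (u _) w, G.adj_comm (u _) w']
  exact ⟨⟨⟨f, hf_inj⟩, hf_adj _ _⟩⟩

lemma nonempty_tBroom_embedding_of_completeTo {V : Type*} {G : SimpleGraph V} {t : ℕ}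
    (ht : t ≠ 0) {S : Set V} (hS : S.ncard = t) (hS_indep : ∀ u ∈ S, ∀ v ∈ S, ¬ G.Adj u v)
    {z w w' : V} (hzw : G.Adj z w) (hww' : G.Adj w w') (hzw' : ¬ G.Adj z w')
    (hz : CompleteTo G z S) (hw : AnticompleteTo G w S) (hw' : AnticompleteTo G w' S) :
    Nonempty (tBroom t ↪g G) := by
  have : Finite S := Set.finite_of_ncard_ne_zero (hS ▸ ht)
  let u : Fin t ↪ V := (Finite.equivFinOfCardEq hS).symm.toEmbedding.trans (.subtype _)
  have hu : ∀ i, u i ∈ S := fun i => Subtype.prop _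
  exact nonempty_tBroom_embedding_of_adj ht u hzw hww' hzw' (fun i => hz _ (hu i))
    (fun i => hw _ (hu i)) (fun i => hw' _ (hu i)) (fun i j => hS_indep _ (hu i) _ (hu j))

lemma NeutralTo.exists_adj_adj_not_adj {V : Type*} {G : SimpleGraph V} {W : Set V}
    {C : (G.induce W).ConnectedComponent} {z : V} (h : NeutralTo G z (Subtype.val '' C.supp)) :
    ∃ x ∈ W, ∃ y ∈ W, G.Adj x y ∧ G.Adj z x ∧ ¬ G.Adj z y := by
  obtain ⟨hnc, hna⟩ := h
  simp only [CompleteTo, AnticompleteTo, Set.forall_mem_image, not_forall, not_not] at hnc hna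
  obtain ⟨b, hbC, hzb⟩ := hnc
  obtain ⟨a, haC, hza⟩ := hna
  obtain ⟨d, -, hd⟩ := (C.reachable_of_mem_supp haC hbC).some.exists_boundary_dart
    {v | G.Adj z v} hza hzb
  exact ⟨_, d.fst.2, _, d.snd.2, d.adj, hd⟩

theorem Z_complete_or_anticomplete_component_general (t q : ℕ) (ht : 2 ≤ t)
    (V : Type) (G : SimpleGraph V) (hfree : _root_.Free G (tBroom t))
    (Vs : Fin (q - 1) → Set V) (Vq : Set V)
    (hVq : Vq.ncard = t)
    (hindepq : ∀ u ∈ Vq, ∀ w ∈ Vq, ¬ G.Adj u w) :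
    ∀ z ∈ {v ∈ nbhd G ((⋃ i, Vs i) ∪ Vq) | CompleteTo G v Vq},
      ∀ I : Set V, I ⊆ (⋃ i, Vs i) →
      ∀ C : (G.induce (Wpart G (⋃ i, Vs i) Vq I)).ConnectedComponent,
        CompleteTo G z (Subtype.val '' C.supp) ∨
        AnticompleteTo G z (Subtype.val '' C.supp) := by
  rintro z ⟨-, hzVq⟩ I - C
  rw [or_iff_not_and_not]
  intro hneutral
  obtain ⟨x, hx, y, hy, hxy, hzx, hzy⟩ := NeutralTo.exists_adj_adj_not_adj hneutral
  have hxVq : AnticompleteTo G x Vq := hx.2.1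
  have hyVq : AnticompleteTo G y Vq := hy.2.1
  exact hfree (nonempty_tBroom_embedding_of_completeTo (by omega) hVq hindepq hzx hxy hzy hzVq
    hxVq hyVq)

/-- Lemma 2.2(ii). With `Q = G[V_1 ∪ ⋯ ∪ V_q]` complete `q`-partite,
`|V_q| = t`, `Z = {v ∈ N(V(Q)) : v complete to V_q}`, for every `z ∈ Z`,
every `I ⊆ V_1 ∪ ⋯ ∪ V_{q-1}` and every connected component `X_I` of `G[W_I]`,
`z` is complete or anticomplete to `V(X_I)`. -/
theorem Z_complete_or_anticomplete_component (t q : ℕ) (ht : 2 ≤ t) (hq : 2 ≤ q)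
    (V : Type) [Fintype V] (G : SimpleGraph V) (hfree : _root_.Free G (tBroom t))
    (Vs : Fin (q - 1) → Set V) (Vq : Set V)
    (hne : ∀ i, (Vs i).Nonempty) (hVq : Vq.ncard = t)
    (hdisj : ∀ i j, i ≠ j → Disjoint (Vs i) (Vs j))
    (hdisjq : ∀ i, Disjoint (Vs i) Vq)
    (hindep : ∀ i, ∀ u ∈ Vs i, ∀ w ∈ Vs i, ¬ G.Adj u w)
    (hindepq : ∀ u ∈ Vq, ∀ w ∈ Vq, ¬ G.Adj u w)
    (hcomp : ∀ i j, i ≠ j → ∀ u ∈ Vs i, ∀ w ∈ Vs j, G.Adj u w)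
    (hcompq : ∀ i, ∀ u ∈ Vs i, ∀ w ∈ Vq, G.Adj u w) :
    ∀ z ∈ {v ∈ nbhd G ((⋃ i, Vs i) ∪ Vq) | CompleteTo G v Vq},
      ∀ I : Set V, I ⊆ (⋃ i, Vs i) →
      ∀ C : (G.induce (Wpart G (⋃ i, Vs i) Vq I)).ConnectedComponent,
        CompleteTo G z (Subtype.val '' C.supp) ∨
        AnticompleteTo G z (Subtype.val '' C.supp) :=
  Z_complete_or_anticomplete_component_general t q ht V G hfree Vs Vq hVq hindepq
end

section
/- Let t ≥ 2 and q ≥ 2 be integers, let G be a finite t-broom-free graph, and let V_1, …, V_q be pairwise disjoint independent sets in G with |V_i| = 1 for i ∈ [q-1] and |V_q| = t, such that Q := G[V_1 ∪ ⋯ ∪ V_q] is a complete q-partite graph with parts V_1, …, V_q. Suppose moreover that q is maximum with this property: there do not exist pairwise disjoint independent sets V'_1, …, V'_{q+1} in G with |V'_i| = 1 for i ∈ [q] and |V'_{q+1}| = t such that G[V'_1 ∪ ⋯ ∪ V'_{q+1}] is a complete (q+1)-partite graph with parts V'_1, …, V'_{q+1}. Let B = {v ∈ N(V(Q)) : v is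 complete to V(Q) \ V_q}. If R is a positive integer with the Ramsey property for (t, ω(G)), then every vertex of B has fewer than R neighbors in B; that is, Δ(G[B]) < R. -/
open SimpleGraph

/-! If `x ∈ B` had `R` neighbours in `B`, the Ramsey property would give among them an independent
`t`-set `S` or a clique of size `ω(G)`. Every vertex of `B` is complete to `V_1 ∪ ⋯ ∪ V_{q-1}`, so in
the first case `{v_1}, …, {v_{q-1}}, {x}, S` would be the parts of a complete `(q+1)`-partite graph
of the same shape, against the maximality of `q`; in the second case the clique together with `x`
would be a clique of size `ω(G) + 1`. -/

/-- The singletons `{v i}` and `S` are the parts of an induced complete multipartite subgraph. -/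
structure SimpleGraph.IsCliqueJoinIndepSet {V : Type*} (G : SimpleGraph V) {n : ℕ}
    (v : Fin n → V) (S : Set V) (t : ℕ) : Prop where
  pairwise_adj : Pairwise fun i j => G.Adj (v i) (v j)
  indep : ∀ u ∈ S, ∀ w ∈ S, ¬ G.Adj u w
  ncard_eq : S.ncard = t
  adj_mem : ∀ i, ∀ w ∈ S, G.Adj (v i) w

namespace SimpleGraph

variable {V : Type*} {G : SimpleGraph V}

lemma not_isNClique_cliqueNum_of_forall_adj [Finite V] {s : Finset V} {x : V}
    (hx : ∀ y ∈ s, G.Adj x y) : ¬ G.IsNClique G.cliqueNum s := by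
  classical
  intro hs
  have hle := IsClique.card_le_cliqueNum (tc := (hs.insert hx).isClique)
  rw [(hs.insert hx).card_eq] at hle
  omega

namespace IsCliqueJoinIndepSet

variable {n t : ℕ} {v : Fin n → V} {S : Set V}

lemma injective (h : G.IsCliqueJoinIndepSet v S t) : Function.Injective v := by
  intro i j hij
  by_contra hne
  exact G.ne_of_adj (h.pairwise_adj hne) hij

lemma notMem (h : G.IsCliqueJoinIndepSet v S t) (i : Fin n) : v i ∉ S :=
  fun hi => (h.adj_mem i _ hi).ne rfl

lemma snoc (h : G.IsCliqueJoinIndepSet v S t) {x : V} (hxv : ∀ i, G.Adj x (v i))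
    (hxS : ∀ w ∈ S, G.Adj x w) :
    G.IsCliqueJoinIndepSet (Fin.snoc (α := fun _ => V) v x) S t where
  pairwise_adj i j hij := by
    induction i using Fin.lastCases <;> induction j using Fin.lastCases <;>
      simp only [Fin.snoc_castSucc, Fin.snoc_last]
    · exact absurd rfl hij
    · exact hxv _
    · exact (hxv _).symm
    · exact h.pairwise_adj fun hij' => hij (congrArg _ hij')
  indep := h.indep
  ncard_eq := h.ncard_eq
  adj_mem i w hw := by
    induction i using Fin.lastCases <;> simp only [Fin.snoc_castSucc, Fin.snoc_last]
    · exact hxS w hw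
    · exact h.adj_mem _ w hw

lemma comp_castLE (h : G.IsCliqueJoinIndepSet v S t) {m : ℕ} (hmn : m ≤ n) :
    G.IsCliqueJoinIndepSet (v ∘ Fin.castLE hmn) S t where
  pairwise_adj _ _ hij := h.pairwise_adj ((Fin.castLE_injective hmn).ne hij)
  indep := h.indep
  ncard_eq := h.ncard_eq
  adj_mem i := h.adj_mem (Fin.castLE hmn i)

end IsCliqueJoinIndepSet

end SimpleGraph

lemma RamseyProp.exists_indepSet_or_clique_subset {R s n : ℕ} (hR : RamseyProp R s n)
    {V : Type} (G : SimpleGraph V) {D : Set V} (hD : D.Finite) (hcard : R ≤ D.ncard) :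
    (∃ S : Finset V, ↑S ⊆ D ∧ IsNIndepSet' G s S) ∨
      ∃ S : Finset V, ↑S ⊆ D ∧ G.IsNClique n S := by
  have := hD.fintype
  rcases hR D (G.induce D) (by rwa [← Nat.card_eq_fintype_card, Nat.card_coe_set_eq])
    with ⟨S, hcardS, hS⟩ | ⟨S, hS⟩
  · refine .inl ⟨S.map (.subtype _), by simp, by simpa using hcardS, ?_⟩
    simp only [Finset.mem_map, Function.Embedding.coe_subtype]
    rintro _ ⟨a, ha, rfl⟩ _ ⟨b, hb, rfl⟩ hab
    exact hS a ha b hb (Subtype.coe_ne_coe.mp hab)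
  · exact .inr ⟨S.map (.subtype _), by simp, (isNClique_induce_iff D S n).mp hS⟩

theorem maxDegree_B_lt_general (t q : ℕ)
    (V : Type) [Fintype V] (G : SimpleGraph V)
    (v : Fin (q - 1) → V) (Vq : Set V)
    (hdisjq : ∀ i, v i ∉ Vq)
    (hcomp : ∀ i j, i ≠ j → G.Adj (v i) (v j))
    (hmax : ¬ ∃ (v' : Fin q → V) (Vq' : Set V),
        Function.Injective v' ∧ Vq'.ncard = t ∧ (∀ i, v' i ∉ Vq') ∧
        (∀ u ∈ Vq', ∀ w ∈ Vq', ¬ G.Adj u w) ∧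
        (∀ i j, i ≠ j → G.Adj (v' i) (v' j)) ∧
        (∀ i, ∀ w ∈ Vq', G.Adj (v' i) w))
    (R : ℕ) (hRam : RamseyProp R t G.cliqueNum) :
    ∀ x ∈ {y ∈ nbhd G (Set.range v ∪ Vq) |
             CompleteTo G y ((Set.range v ∪ Vq) \ Vq)},
      ({y ∈ {z ∈ nbhd G (Set.range v ∪ Vq) |
               CompleteTo G z ((Set.range v ∪ Vq) \ Vq)} | G.Adj x y}).ncard < R := by
  intro x hx
  by_contra! hcard
  have hvQ : ∀ i, v i ∈ (Set.range v ∪ Vq) \ Vq := fun i => ⟨.inl ⟨i, rfl⟩, hdisjq i⟩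
  have hxv : ∀ i, G.Adj x (v i) := fun i => hx.2 _ (hvQ i)
  rcases hRam.exists_indepSet_or_clique_subset G (Set.toFinite _) hcard
    with ⟨S, hSD, hS⟩ | ⟨S, hSD, hS⟩
  · have hvS : G.IsCliqueJoinIndepSet v (S : Set V) t :=
      { pairwise_adj := hcomp
        indep := fun u hu w hw => by
          obtain rfl | huw := eq_or_ne u w
          exacts [G.irrefl, hS.2 u hu w hw huw]
        ncard_eq := by rw [Set.ncard_coe_finset, hS.1]
        adj_mem := fun i w hw => ((hSD hw).1.2 _ (hvQ i)).symm }
    have h := (hvS.snoc hxv fun w hw => (hSD hw).2).comp_castLE (m := q) (by omega)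
    exact hmax ⟨_, _, h.injective, h.ncard_eq, h.notMem, h.indep, h.pairwise_adj, h.adj_mem⟩
  · exact not_isNClique_cliqueNum_of_forall_adj (fun y hy => (hSD hy).2) hS

/-- Lemma 2.3. Let `Q` be complete `q`-partite with parts
`V_1 = {v 1}, …, V_{q-1} = {v (q-1)}` singletons and `|V_q| = t`, with `q` maximum.
If `B = {x ∈ N(V(Q)) : x complete to V(Q) \ V_q}` and `R` has the Ramsey property for
`(t, ω(G))`, then every vertex of `B` has fewer than `R` neighbors in `B`. -/
theorem maxDegree_B_lt (t q : ℕ) (ht : 2 ≤ t) (hq : 2 ≤ q)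
    (V : Type) [Fintype V] (G : SimpleGraph V) (hfree : _root_.Free G (tBroom t))
    (v : Fin (q - 1) → V) (Vq : Set V)
    (hinj : Function.Injective v) (hVq : Vq.ncard = t)
    (hdisjq : ∀ i, v i ∉ Vq)
    (hindepq : ∀ u ∈ Vq, ∀ w ∈ Vq, ¬ G.Adj u w)
    (hcomp : ∀ i j, i ≠ j → G.Adj (v i) (v j))
    (hcompq : ∀ i, ∀ w ∈ Vq, G.Adj (v i) w)
    (hmax : ¬ ∃ (v' : Fin q → V) (Vq' : Set V),
        Function.Injective v' ∧ Vq'.ncard = t ∧ (∀ i, v' i ∉ Vq') ∧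
        (∀ u ∈ Vq', ∀ w ∈ Vq', ¬ G.Adj u w) ∧
        (∀ i j, i ≠ j → G.Adj (v' i) (v' j)) ∧
        (∀ i, ∀ w ∈ Vq', G.Adj (v' i) w))
    (R : ℕ) (hR : 0 < R) (hRam : RamseyProp R t G.cliqueNum) :
    ∀ x ∈ {y ∈ nbhd G (Set.range v ∪ Vq) |
             CompleteTo G y ((Set.range v ∪ Vq) \ Vq)},
      ({y ∈ {z ∈ nbhd G (Set.range v ∪ Vq) |
               CompleteTo G z ((Set.range v ∪ Vq) \ Vq)} | G.Adj x y}).ncard < R :=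
  maxDegree_B_lt_general t q V G v Vq hdisjq hcomp hmax R hRam
end

section
/- Let t ≥ 2 and q ≥ 2 be integers, let G be a finite t-broom-free graph, and let V_1, …, V_q be pairwise disjoint independent sets in G with |V_i| = 1 for i ∈ [q-1] and |V_q| = t, such that Q := G[V_1 ∪ ⋯ ∪ V_q] is a complete q-partite graph with parts V_1, …, V_q. Let A = {v ∈ N(V(Q)) : v is neutral to V_q and v is not complete to V(Q) \ V_q}. If R is a positive integer with the Ramsey property for (t, ω(G)), then |A| < t²·ω(G)·R. -/
open SimpleGraph

/-!
Every `x ∈ A` has a neighbour `a` and a non-neighbour `b` in `V_q`, and a non-neighbour `v_i`.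
For fixed `a`, `b`, `v_i`, fewer than `R` vertices outside `Q` are adjacent to `a` but to neither
`v_i` nor `b`: an independent `t`-set among them would be the leaves of a `t`-broom with centre
`a` and handle `a - v_i - b`, and an `ω(G)`-clique among them would extend by `a`.
Greedily, the vertices adjacent to `a` and not to `b` are then at most `ω(G) (R - 1)`: pick one,
`x`, and a `v_i` it misses; fewer than `R` of them miss `v_i`, and we recurse on those adjacent to
`v_i`. The chosen `v_i` form a clique to which each remaining vertex is complete, so the recursion
has depth at most `ω(G)`. Summing over the `t²` pairs `(a, b)` gives `|A| ≤ t² ω(G) (R - 1)`.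
-/

open Finset

theorem tBroom_adj_iff {t : ℕ} (p q : Fin (t + 3)) :
    (tBroom t).Adj p q ↔ p.val ≠ q.val ∧
      ((p.val = 0 ∧ q.val = 1) ∨ (p.val = 1 ∧ q.val = 2) ∨ (p.val = 0 ∧ 3 ≤ q.val) ∨
        (q.val = 0 ∧ p.val = 1) ∨ (q.val = 1 ∧ p.val = 2) ∨ (q.val = 0 ∧ 3 ≤ p.val)) := by
  simp only [tBroom, fromRel_adj, ne_eq, Fin.ext_iff, Fin.val_zero, Fin.val_one, Fin.val_two]
  tauto

theorem nonempty_tBroom_embedding {V : Type*} {G : SimpleGraph V} {t : ℕ} {u w₁ w₂ : V}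
    {x : Fin t → V} (hx : Function.Injective x) (huw₁ : G.Adj u w₁) (hw₁w₂ : G.Adj w₁ w₂)
    (huw₂ : ¬ G.Adj u w₂) (hne : u ≠ w₂) (hxu : ∀ j, G.Adj (x j) u)
    (hxw₁ : ∀ j, x j ≠ w₁ ∧ ¬ G.Adj (x j) w₁) (hxw₂ : ∀ j, ¬ G.Adj (x j) w₂)
    (hxx : ∀ j k, ¬ G.Adj (x j) (x k)) :
    Nonempty (tBroom t ↪g G) := by
  have hcases (p : Fin (t + 3)) :
      p = 0 ∨ p = Fin.succ 0 ∨ p = Fin.succ (Fin.succ 0) ∨ ∃ j : Fin t, p = j.succ.succ.succ := by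
    rcases Fin.eq_zero_or_eq_succ p with rfl | ⟨p, rfl⟩; · simp
    rcases Fin.eq_zero_or_eq_succ p with rfl | ⟨p, rfl⟩; · simp
    rcases Fin.eq_zero_or_eq_succ p with rfl | ⟨p, rfl⟩ <;> simp
  refine ⟨⟨⟨Fin.cons u (Fin.cons w₁ (Fin.cons w₂ x)), ?_⟩, ?_⟩⟩
  · simp only [Fin.cons_injective_iff, Fin.range_cons, Set.mem_insert_iff, Set.mem_range, not_or,
      not_exists]
    exact ⟨⟨huw₁.ne, hne, fun j => (hxu j).ne⟩, ⟨hw₁w₂.ne, fun j => (hxw₁ j).1⟩,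
      fun j h => huw₂ (h ▸ (hxu j).symm), hx⟩
  · have hw₂u : ¬ G.Adj w₂ u := fun h => huw₂ h.symm
    have hux (j : Fin t) : G.Adj u (x j) := (hxu j).symm
    have hw₁x (j : Fin t) : ¬ G.Adj w₁ (x j) := fun h => (hxw₁ j).2 h.symm
    have hw₂x (j : Fin t) : ¬ G.Adj w₂ (x j) := fun h => hxw₂ j h.symm
    intro p q
    rcases hcases p with rfl | rfl | rfl | ⟨j, rfl⟩ <;>
      rcases hcases q with rfl | rfl | rfl | ⟨k, rfl⟩ <;>
      simp only [Function.Embedding.coeFn_mk, tBroom_adj_iff, Fin.cons_zero, Fin.cons_succ,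
        Fin.val_succ, Fin.val_zero] <;>
      simp [huw₁, huw₁.symm, hw₁w₂, hw₁w₂.symm, huw₂, hw₂u, hux, hxu, hw₁x, hxw₁, hw₂x, hxw₂, hxx]

theorem RamseyProp.exists_subset {V : Type} {G : SimpleGraph V} {R s n : ℕ}
    (h : RamseyProp R s n) (B : Finset V) (hB : R ≤ #B) :
    (∃ L ⊆ B, #L = s ∧ G.IsIndepSet L) ∨ ∃ K ⊆ B, G.IsNClique n K := by
  rcases h (B : Set V) (G.induce B) (by simpa using hB) with ⟨S, hcard, hindep⟩ | ⟨S, hS⟩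
  · refine .inl ⟨S.map (.subtype _), fun _ hx => property_of_mem_map_subtype S hx,
      by simpa using hcard, ?_⟩
    rintro _ hx _ hy hxy
    simp only [coe_map, Function.Embedding.coe_subtype, Set.mem_image, mem_coe] at hx hy
    obtain ⟨x, hx, rfl⟩ := hx
    obtain ⟨y, hy, rfl⟩ := hy
    exact hindep x hx y hy (fun h => hxy (congrArg Subtype.val h))
  · exact .inr ⟨S.map (.subtype _), fun _ hx => property_of_mem_map_subtype S hx,
      (isNClique_induce_iff _ _ _).1 hS⟩

theorem card_lt_of_free_tBroom {V : Type} [Finite V] [DecidableEq V] {G : SimpleGraph V}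
    {t R : ℕ} (hfree : _root_.Free G (tBroom t)) (hRam : RamseyProp R t G.cliqueNum)
    (hR : 0 < R) {a w b : V} (haw : G.Adj a w) (hwb : G.Adj w b) (hab : ¬ G.Adj a b)
    (B : Finset V) (hB : ∀ x ∈ B, x ≠ w ∧ G.Adj x a ∧ ¬ G.Adj x w ∧ ¬ G.Adj x b) :
    #B < R := by
  by_contra! hRB
  obtain ⟨x₀, hx₀⟩ : B.Nonempty := card_pos.1 (hR.trans_le hRB)
  have hne : a ≠ b := fun h => (hB x₀ hx₀).2.2.2 (h ▸ (hB x₀ hx₀).2.1)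
  rcases hRam.exists_subset B hRB with ⟨L, hLB, hL, hLindep⟩ | ⟨K, hKB, hK⟩
  · -- the leaves `L`, the centre `a` and the path `a - w - b` form a `t`-broom
    let e := L.equivFinOfCardEq hL
    let x : Fin t → V := fun j => e.symm j
    have hxB (j : Fin t) : x j ∈ B := hLB (e.symm j).2
    refine hfree (nonempty_tBroom_embedding (x := x)
      (Subtype.val_injective.comp e.symm.injective) haw hwb hab hne
      (fun j => (hB _ (hxB j)).2.1) (fun j => ⟨(hB _ (hxB j)).1, (hB _ (hxB j)).2.2.1⟩)
      (fun j => (hB _ (hxB j)).2.2.2) (fun j k => ?_))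
    rcases eq_or_ne j k with rfl | hjk
    · exact G.irrefl
    · exact hLindep (e.symm j).2 (e.symm k).2
        (fun h => hjk (e.symm.injective (Subtype.val_injective h)))
  · have hKa : G.IsNClique (G.cliqueNum + 1) (insert a K) :=
      hK.insert fun y hy => ((hB y (hKB hy)).2.1).symm
    simpa [hKa.card_eq] using hKa.isClique.card_le_cliqueNum

theorem card_le_of_forall_card_filter_not_adj_le {V : Type*} [Finite V] [DecidableEq V]
    {G : SimpleGraph V} [DecidableRel G.Adj] {T : Set V} (hT : G.IsClique T) {m : ℕ}
    (S : Finset V) (hsmall : ∀ u ∈ T, #{x ∈ S | ¬ G.Adj x u} ≤ m) (C : Finset V) (hCT : ↑C ⊆ T)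
    (hS : ∀ x ∈ S, CompleteTo G x C ∧ ¬ CompleteTo G x T) :
    #S ≤ (G.cliqueNum - #C) * m := by
  induction S using Finset.strongInduction generalizing C with
  | H S ih =>
  obtain rfl | ⟨x, hx⟩ := S.eq_empty_or_nonempty
  · simp
  obtain ⟨hxC, hxT⟩ := hS x hx
  obtain ⟨u, huT, hxu⟩ : ∃ u ∈ T, ¬ G.Adj x u := by simpa [CompleteTo] using hxT
  have huC : u ∉ C := fun hu => hxu (hxC u hu)
  have hC : #C < G.cliqueNum := by
    have hxC' : x ∉ C := fun h => G.irrefl (hxC x h)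
    have hclique : G.IsClique (insert x C : Finset V) := by
      rw [coe_insert]
      exact (hT.subset hCT).insert fun c hc _ => hxC c hc
    simpa [card_insert_of_notMem hxC'] using hclique.card_le_cliqueNum
  have hrest : #{y ∈ S | G.Adj y u} ≤ (G.cliqueNum - #(insert u C)) * m := by
    refine ih _ (filter_ssubset.2 ⟨x, hx, hxu⟩)
      (fun w hw => (card_le_card (filter_subset_filter _ (filter_subset _ _))).trans (hsmall w hw))
      (insert u C) (by simpa [Set.insert_subset_iff] using ⟨huT, hCT⟩) fun y hy => ?_
    rw [mem_filter] at hy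
    refine ⟨?_, (hS y hy.1).2⟩
    simpa [CompleteTo, hy.2] using (hS y hy.1).1
  rw [card_insert_of_notMem huC] at hrest
  calc #S = #{y ∈ S | ¬ G.Adj y u} + #{y ∈ S | G.Adj y u} := by
        rw [add_comm, card_filter_add_card_filter_not]
    _ ≤ m + (G.cliqueNum - (#C + 1)) * m := add_le_add (hsmall u huT) hrest
    _ = (G.cliqueNum - #C) * m := by
        rw [← one_add_mul, Nat.sub_add_eq, Nat.add_sub_cancel' (Nat.le_sub_of_add_le' hC)]

theorem card_le_of_free_tBroom {V : Type} [Finite V] [DecidableEq V] {G : SimpleGraph V}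
    [DecidableRel G.Adj] {t R : ℕ} (hfree : _root_.Free G (tBroom t))
    (hRam : RamseyProp R t G.cliqueNum) (hR : 0 < R) {T : Set V} (hT : G.IsClique T) {a b : V}
    (haT : ∀ w ∈ T, G.Adj a w) (hbT : ∀ w ∈ T, G.Adj w b) (hab : ¬ G.Adj a b) (S : Finset V)
    (hS : ∀ x ∈ S, x ∉ T ∧ G.Adj x a ∧ ¬ G.Adj x b ∧ ¬ CompleteTo G x T) :
    #S ≤ G.cliqueNum * (R - 1) := by
  have hsmall (w : V) (hw : w ∈ T) : #{x ∈ S | ¬ G.Adj x w} ≤ R - 1 := by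
    refine Nat.le_sub_one_of_lt (card_lt_of_free_tBroom hfree hRam hR (haT w hw) (hbT w hw) hab
      _ fun x hx => ?_)
    rw [mem_filter] at hx
    obtain ⟨hxT, hxa, hxb, -⟩ := hS x hx.1
    exact ⟨fun h => hxT (h ▸ hw), hxa, hx.2, hxb⟩
  simpa using card_le_of_forall_card_filter_not_adj_le hT S hsmall ∅ (by simp)
    fun x hx => ⟨by simp [CompleteTo], (hS x hx).2.2.2⟩

theorem card_le_card_sq_mul_of_neutralTo {V : Type*} [DecidableEq V] {G : SimpleGraph V}
    [DecidableRel G.Adj] (P A : Finset V) {m : ℕ} (hA : ∀ x ∈ A, NeutralTo G x P)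
    (hm : ∀ a ∈ P, ∀ b ∈ P, #{x ∈ A | G.Adj x a ∧ ¬ G.Adj x b} ≤ m) :
    #A ≤ #P ^ 2 * m := by
  have hcover : A ⊆ (P ×ˢ P).biUnion fun p => {x ∈ A | G.Adj x p.1 ∧ ¬ G.Adj x p.2} := by
    intro x hx
    obtain ⟨hxb, hxa⟩ := hA x hx
    obtain ⟨b, hb, hxb⟩ : ∃ b ∈ P, ¬ G.Adj x b := by simpa [CompleteTo] using hxb
    obtain ⟨a, ha, hxa⟩ : ∃ a ∈ P, G.Adj x a := by simpa [AnticompleteTo] using hxa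
    exact mem_biUnion.2 ⟨(a, b), mem_product.2 ⟨ha, hb⟩, mem_filter.2 ⟨hx, hxa, hxb⟩⟩
  rw [sq, ← card_product]
  exact (card_le_card hcover).trans
    (card_biUnion_le_card_mul _ _ _ fun p hp => hm _ (mem_product.1 hp).1 _ (mem_product.1 hp).2)

theorem SimpleGraph.cliqueNum_pos {V : Type*} [Finite V] [Nonempty V] (G : SimpleGraph V) :
    0 < G.cliqueNum := by
  obtain ⟨a⟩ := ‹Nonempty V›
  exact (card_pos.2 (singleton_nonempty a)).trans_le
    (IsClique.card_le_cliqueNum (G := G) (tc := by simp))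

theorem card_A_lt_general (t q : ℕ) (ht : 2 ≤ t)
    (V : Type) [Fintype V] (G : SimpleGraph V) (hfree : _root_.Free G (tBroom t))
    (v : Fin (q - 1) → V) (Vq : Set V)
    (hVq : Vq.ncard = t)
    (hindepq : ∀ u ∈ Vq, ∀ w ∈ Vq, ¬ G.Adj u w)
    (hcomp : ∀ i j, i ≠ j → G.Adj (v i) (v j))
    (hcompq : ∀ i, ∀ w ∈ Vq, G.Adj (v i) w)
    (R : ℕ) (hR : 0 < R) (hRam : RamseyProp R t G.cliqueNum) :
    ({x ∈ nbhd G (Set.range v ∪ Vq) | NeutralTo G x Vq ∧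
        ¬ CompleteTo G x ((Set.range v ∪ Vq) \ Vq)}).ncard
      < t ^ 2 * G.cliqueNum * R := by
  classical
  set T := (Set.range v ∪ Vq) \ Vq
  set A := {x ∈ nbhd G (Set.range v ∪ Vq) | NeutralTo G x Vq ∧ ¬ CompleteTo G x T}
  have hTv {w : V} (hw : w ∈ T) : ∃ i, v i = w := hw.1.resolve_right hw.2
  have hT : G.IsClique T := by
    rintro _ hw _ hw' hne
    obtain ⟨i, rfl⟩ := hTv hw
    obtain ⟨j, rfl⟩ := hTv hw'
    exact hcomp i j fun h => hne (congrArg v h)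
  have hpair (a : V) (ha : a ∈ Vq) (b : V) (hb : b ∈ Vq) :
      #{x ∈ A.toFinset | G.Adj x a ∧ ¬ G.Adj x b} ≤ G.cliqueNum * (R - 1) :=
    card_le_of_free_tBroom hfree hRam hR hT
      (fun _ hw => by obtain ⟨i, rfl⟩ := hTv hw; exact (hcompq i a ha).symm)
      (fun _ hw => by obtain ⟨i, rfl⟩ := hTv hw; exact hcompq i b hb) (hindepq a ha b hb) _
      fun x hx => by
        simp only [mem_filter, Set.mem_toFinset] at hx
        exact ⟨fun h => hx.1.1.1 h.1, hx.2.1, hx.2.2, hx.1.2.2⟩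
  obtain ⟨a, -⟩ := Set.nonempty_of_ncard_ne_zero (s := Vq) (by omega)
  have : Nonempty V := ⟨a⟩
  calc A.ncard = #A.toFinset := Set.ncard_eq_toFinset_card' A
    _ ≤ #Vq.toFinset ^ 2 * (G.cliqueNum * (R - 1)) :=
        card_le_card_sq_mul_of_neutralTo _ _
          (fun x hx => by simpa using (Set.mem_toFinset.1 hx).2.1)
          fun a ha b hb => hpair a (by simpa using ha) b (by simpa using hb)
    _ = t ^ 2 * (G.cliqueNum * (R - 1)) := by rw [← Set.ncard_eq_toFinset_card', hVq]
    _ < t ^ 2 * G.cliqueNum * R := by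
        rw [mul_assoc]
        exact Nat.mul_lt_mul_of_pos_left
          (Nat.mul_lt_mul_of_pos_left (Nat.sub_lt hR one_pos) G.cliqueNum_pos) (by positivity)

/-- Lemma 2.4. Let `Q` be complete `q`-partite with parts
`V_1, …, V_{q-1}` singletons and `|V_q| = t`.  If
`A = {x ∈ N(V(Q)) : x neutral to V_q and not complete to V(Q) \ V_q}` and `R` has the
Ramsey property for `(t, ω(G))`, then `|A| < t² ω(G) R`. -/
theorem card_A_lt (t q : ℕ) (ht : 2 ≤ t) (hq : 2 ≤ q)
    (V : Type) [Fintype V] (G : SimpleGraph V) (hfree : _root_.Free G (tBroom t))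
    (v : Fin (q - 1) → V) (Vq : Set V)
    (hinj : Function.Injective v) (hVq : Vq.ncard = t)
    (hdisjq : ∀ i, v i ∉ Vq)
    (hindepq : ∀ u ∈ Vq, ∀ w ∈ Vq, ¬ G.Adj u w)
    (hcomp : ∀ i j, i ≠ j → G.Adj (v i) (v j))
    (hcompq : ∀ i, ∀ w ∈ Vq, G.Adj (v i) w)
    (R : ℕ) (hR : 0 < R) (hRam : RamseyProp R t G.cliqueNum) :
    ({x ∈ nbhd G (Set.range v ∪ Vq) | NeutralTo G x Vq ∧
        ¬ CompleteTo G x ((Set.range v ∪ Vq) \ Vq)}).ncard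
      < t ^ 2 * G.cliqueNum * R :=
  card_A_lt_general t q ht V G hfree v Vq hVq hindepq hcomp hcompq R hR hRam
end

section
/- Let q ≥ 2 be an integer, let G be a finite chair-free graph, and let V_1, …, V_q be pairwise disjoint independent sets in G with V_i = {v_i} for i ∈ [q-1] and V_q = {v_q, v_q'}, such that Q := G[V_1 ∪ ⋯ ∪ V_q] is a complete q-partite graph with parts V_1, …, V_q. Let A = {v ∈ N(V(Q)) : v is neutral to V_q and v is not complete to V(Q) \ V_q}. Then both G[A ∩ N(v_q)] and G[A ∩ N(v_q')] are perfect graphs; that is, every induced subgraph H of either of these graphs satisfies χ(H) = ω(H). -/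
/-!
For `x ∈ A ∩ N(v_q)` let `M x` be the set of indices `i` with `x` nonadjacent to `v_i`; it is
nonempty. Chair-freeness gives two rules: nonadjacent vertices have disjoint `M`, and adjacent
vertices with a common non-neighbour have equal `M`. Any graph with such a labelling is perfect, by
induction on the vertex set. If the graph or its complement is disconnected, colour the two sides
separately. Otherwise the rules forbid an independent set of size three, and the vertices split
into two cliques: those with the same label as a fixed vertex `a`, and their non-neighbours. A
graph covered by two cliques is perfect by König's theorem, obtained from Hall's theorem with
deficiency.
-/

open SimpleGraph

open Finset

theorem Finset.exists_injective_mem_disjSum_of_card_le {ι α : Type*} [DecidableEq α]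
    (t : ι → Finset α) (d : ℕ) (h : ∀ s : Finset ι, #s ≤ #(s.biUnion t) + d) :
    ∃ f : ι → α ⊕ Fin d, Function.Injective f ∧ ∀ i, f i ∈ (t i).disjSum univ := by
  refine (all_card_le_biUnion_card_iff_exists_injective _).1 fun s => ?_
  rcases s.eq_empty_or_nonempty with rfl | ⟨i, hi⟩
  · simp
  calc #s ≤ #(s.biUnion t) + d := h s
    _ = #((s.biUnion t).disjSum univ) := by rw [card_disjSum, card_univ, Fintype.card_fin]
    _ ≤ _ := card_le_card fun y hy => ?_
  rcases y with a | k
  · obtain ⟨j, hj, ha⟩ := mem_biUnion.1 (inl_mem_disjSum.1 hy)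
    exact mem_biUnion.2 ⟨j, hj, inl_mem_disjSum.2 ha⟩
  · exact mem_biUnion.2 ⟨i, hi, inr_mem_disjSum.2 (mem_univ k)⟩

section InducedSubgraph

variable {V : Type*} (G : SimpleGraph V)

theorem card_le_cliqueNum_induce [Finite V] {S : Set V} {X : Finset V} (hXS : ↑X ⊆ S)
    (hX : G.IsClique (X : Set V)) : #X ≤ (G.induce S).cliqueNum := by
  classical
  have hcard : #(X.subtype (· ∈ S)) = #X := by
    rw [card_subtype, filter_true_of_mem fun x hx => hXS hx]
  rw [← hcard]
  refine IsClique.card_le_cliqueNum (tc := fun a ha b hb hab => ?_)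
  exact hX (mem_subtype.1 ha) (mem_subtype.1 hb) (Subtype.coe_ne_coe.2 hab)

theorem exists_isClique_card_eq_cliqueNum_induce [Finite V] (S : Set V) :
    ∃ X : Finset V, ↑X ⊆ S ∧ G.IsClique (X : Set V) ∧ #X = (G.induce S).cliqueNum := by
  obtain ⟨s, hs⟩ := (G.induce S).exists_isNClique_cliqueNum
  refine ⟨s.map (Function.Embedding.subtype _), ?_, ?_, by rw [card_map, hs.card_eq]⟩
  · intro x hx
    obtain ⟨y, -, rfl⟩ := mem_map.1 hx
    exact y.2
  · intro a ha b hb hab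
    obtain ⟨a, ha', rfl⟩ := mem_map.1 (mem_coe.1 ha)
    obtain ⟨b, hb', rfl⟩ := mem_map.1 (mem_coe.1 hb)
    exact hs.isClique ha' hb' fun h => hab (congrArg Subtype.val h)

theorem cliqueNum_induce_mono [Finite V] {S T : Set V} (h : S ⊆ T) :
    (G.induce S).cliqueNum ≤ (G.induce T).cliqueNum := by
  obtain ⟨X, hXS, hX, hcard⟩ := exists_isClique_card_eq_cliqueNum_induce G S
  exact hcard ▸ card_le_cliqueNum_induce G (hXS.trans h) hX

theorem cliqueNum_induce_add_le [Finite V] {S S₁ : Set V} (hS₁ : S₁ ⊆ S)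
    (h : ∀ a ∈ S₁, CompleteTo G a (S \ S₁)) :
    (G.induce S₁).cliqueNum + (G.induce (S \ S₁)).cliqueNum ≤ (G.induce S).cliqueNum := by
  classical
  obtain ⟨X₁, hX₁S, hX₁, hcard₁⟩ := exists_isClique_card_eq_cliqueNum_induce G S₁
  obtain ⟨X₂, hX₂S, hX₂, hcard₂⟩ := exists_isClique_card_eq_cliqueNum_induce G (S \ S₁)
  have hdisj : Disjoint X₁ X₂ := disjoint_left.2 fun a h₁ h₂ => (hX₂S h₂).2 (hX₁S h₁)
  rw [← hcard₁, ← hcard₂, ← card_union_of_disjoint hdisj]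
  refine card_le_cliqueNum_induce G ?_ ?_ <;> rw [coe_union]
  · exact Set.union_subset (hX₁S.trans hS₁) (hX₂S.trans Set.sdiff_subset)
  · have := G.symm
    exact Set.pairwise_union_of_symm.2
      ⟨hX₁, hX₂, fun a ha b hb _ => h a (hX₁S ha) b (hX₂S hb)⟩

theorem colorable_induce_of_mapsTo {α : Type*} {S : Set V} (c : V → α) (Y : Finset α)
    (hY : Set.MapsTo c S Y) (hc : ∀ a ∈ S, ∀ b ∈ S, G.Adj a b → c a ≠ c b) :
    (G.induce S).Colorable #Y := by
  simpa using (Coloring.mk (fun u : S => (⟨c u, hY u.2⟩ : Y))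
    fun {u w} huw h => hc u u.2 w w.2 huw (congrArg Subtype.val h)).colorable

theorem colorable_induce_iff {S : Set V} {n : ℕ} :
    (G.induce S).Colorable n ↔
      ∃ c : V → ℕ, (∀ a ∈ S, c a < n) ∧ ∀ a ∈ S, ∀ b ∈ S, G.Adj a b → c a ≠ c b := by
  classical
  constructor
  · intro h
    obtain ⟨C, hC⟩ := (colorable_iff_exists_bdd_nat_coloring n).1 h
    refine ⟨fun a => if ha : a ∈ S then C ⟨a, ha⟩ else 0, fun a ha => ?_, fun a ha b hb hab => ?_⟩
    · simpa [ha] using hC ⟨a, ha⟩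
    · simpa [ha, hb] using C.valid (show (G.induce S).Adj ⟨a, ha⟩ ⟨b, hb⟩ from hab)
  · rintro ⟨c, hlt, hc⟩
    simpa using colorable_induce_of_mapsTo G c (range n) (fun a ha => by simpa using hlt a ha) hc

theorem colorable_induce_of_anticompleteTo {S S₁ : Set V} {n : ℕ}
    (h : ∀ a ∈ S₁, AnticompleteTo G a (S \ S₁)) (h₁ : (G.induce S₁).Colorable n)
    (h₂ : (G.induce (S \ S₁)).Colorable n) : (G.induce S).Colorable n := by
  classical
  obtain ⟨c₁, hlt₁, hc₁⟩ := (colorable_induce_iff G).1 h₁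
  obtain ⟨c₂, hlt₂, hc₂⟩ := (colorable_induce_iff G).1 h₂
  refine (colorable_induce_iff G).2 ⟨fun a => if a ∈ S₁ then c₁ a else c₂ a,
    fun a ha => ?_, fun a ha b hb hab => ?_⟩
  · dsimp only
    split_ifs with ha₁
    exacts [hlt₁ a ha₁, hlt₂ a ⟨ha, ha₁⟩]
  · by_cases ha₁ : a ∈ S₁ <;> by_cases hb₁ : b ∈ S₁ <;> simp only [ha₁, hb₁, if_true, if_false]
    · exact hc₁ a ha₁ b hb₁ hab
    · exact absurd hab (h a ha₁ b ⟨hb, hb₁⟩)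
    · exact absurd hab.symm (h b hb₁ a ⟨ha, ha₁⟩)
    · exact hc₂ a ⟨ha, ha₁⟩ b ⟨hb, hb₁⟩ hab

theorem colorable_induce_add {S S₁ : Set V} {m n : ℕ} (h₁ : (G.induce S₁).Colorable m)
    (h₂ : (G.induce (S \ S₁)).Colorable n) : (G.induce S).Colorable (m + n) := by
  classical
  obtain ⟨c₁, hlt₁, hc₁⟩ := (colorable_induce_iff G).1 h₁
  obtain ⟨c₂, hlt₂, hc₂⟩ := (colorable_induce_iff G).1 h₂
  refine (colorable_induce_iff G).2 ⟨fun a => if a ∈ S₁ then c₁ a else m + c₂ a,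
    fun a ha => ?_, fun a ha b hb hab => ?_⟩
  · dsimp only
    split_ifs with ha₁
    exacts [(hlt₁ a ha₁).trans_le (Nat.le_add_right m n), Nat.add_lt_add_left (hlt₂ a ⟨ha, ha₁⟩) m]
  · by_cases ha₁ : a ∈ S₁ <;> by_cases hb₁ : b ∈ S₁ <;> simp only [ha₁, hb₁, if_true, if_false]
    · exact hc₁ a ha₁ b hb₁ hab
    · have := hlt₁ a ha₁; omega
    · have := hlt₁ b hb₁; omega
    · exact fun h => hc₂ a ⟨ha, ha₁⟩ b ⟨hb, hb₁⟩ hab (Nat.add_left_cancel h)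

end InducedSubgraph

section CoBipartite

variable {V : Type*} (G : SimpleGraph V)

theorem card_add_card_commonNeighbors_le_cliqueNum [Finite V] [DecidableEq V]
    [DecidableRel G.Adj] {K₁ K₂ A : Finset V} (hK : Disjoint K₁ K₂) (h₁ : G.IsClique (K₁ : Set V))
    (h₂ : G.IsClique (K₂ : Set V)) (hA : A ⊆ K₁) :
    #A + #{b ∈ K₂ | ∀ a ∈ A, G.Adj a b} ≤ (G.induce (↑K₁ ∪ ↑K₂)).cliqueNum := by
  rw [← card_union_of_disjoint ((hK.mono_left hA).mono_right (filter_subset _ _)), ← coe_union]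
  refine card_le_cliqueNum_induce G (coe_subset.2 (union_subset_union hA (filter_subset _ _))) ?_
  have := G.symm
  rw [coe_union]
  refine Set.pairwise_union_of_symm.2 ⟨h₁.subset (coe_subset.2 hA),
    h₂.subset (coe_subset.2 (filter_subset _ _)), fun a ha b hb _ => ?_⟩
  exact (mem_filter.1 hb).2 a ha

theorem colorable_cliqueNum_induce_union [Finite V] {K₁ K₂ : Finset V} (hK : Disjoint K₁ K₂)
    (h₁ : G.IsClique (K₁ : Set V)) (h₂ : G.IsClique (K₂ : Set V)) :
    (G.induce (↑K₁ ∪ ↑K₂)).Colorable (G.induce (↑K₁ ∪ ↑K₂)).cliqueNum := by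
  classical
  set ω := (G.induce (↑K₁ ∪ ↑K₂)).cliqueNum
  -- Colour `K₂` injectively and match each vertex of `K₁` to a non-neighbour in `K₂` or to one of
  -- `ω - #K₂` spare colours; the cliques above are exactly what Hall's condition asks for.
  let t : V → Finset V := fun a => {b ∈ K₂ | ¬G.Adj a b}
  have hclique : ∀ A ⊆ K₁, #A ≤ #(A.biUnion t) + (ω - #K₂) := by
    intro A hA
    have hcover : K₂ ⊆ {b ∈ K₂ | ∀ a ∈ A, G.Adj a b} ∪ A.biUnion t := by
      intro b hb
      by_cases hbA : ∀ a ∈ A, G.Adj a b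
      · exact mem_union_left _ (mem_filter.2 ⟨hb, hbA⟩)
      · push Not at hbA
        obtain ⟨a, ha, hab⟩ := hbA
        exact mem_union_right _ (mem_biUnion.2 ⟨a, ha, mem_filter.2 ⟨hb, hab⟩⟩)
    have := card_le_card hcover
    have := card_union_le {b ∈ K₂ | ∀ a ∈ A, G.Adj a b} (A.biUnion t)
    have := card_add_card_commonNeighbors_le_cliqueNum G hK h₁ h₂ hA
    omega
  have hK₂ : #K₂ ≤ ω := by
    simpa using card_add_card_commonNeighbors_le_cliqueNum G hK h₁ h₂ (empty_subset K₁)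
  obtain ⟨f, hf, hft⟩ := exists_injective_mem_disjSum_of_card_le (fun a : K₁ => t a) (ω - #K₂)
    fun s => by
      simpa [image_biUnion, card_image_of_injective _ Subtype.val_injective] using
        hclique (s.image Subtype.val) fun a ha => by obtain ⟨a, -, rfl⟩ := mem_image.1 ha; exact a.2
  let c : V → V ⊕ Fin (ω - #K₂) := fun a => if ha : a ∈ K₁ then f ⟨a, ha⟩ else .inl a
  have hcol := colorable_induce_of_mapsTo G (S := ↑K₁ ∪ ↑K₂) c (K₂.disjSum univ) ?_ ?_
  · rwa [card_disjSum, card_univ, Fintype.card_fin, Nat.add_sub_cancel' hK₂] at hcol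
  · intro a ha
    by_cases ha₁ : a ∈ K₁
    · simpa [c, ha₁] using disjSum_mono (filter_subset _ K₂) subset_rfl (hft ⟨a, ha₁⟩)
    · simpa [c, ha₁] using ha.resolve_left ha₁
  · intro a ha b hb hab
    have hft' : ∀ (a : K₁) b, f a = .inl b → ¬G.Adj a b := fun a b h =>
      (mem_filter.1 (inl_mem_disjSum.1 (h ▸ hft a : Sum.inl b ∈ (t a).disjSum univ))).2
    by_cases ha₁ : a ∈ K₁ <;> by_cases hb₁ : b ∈ K₁ <;> simp only [c, ha₁, hb₁, dif_pos]
    · exact fun h => hab.ne (congrArg Subtype.val (hf h))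
    · exact fun h => hft' _ _ h hab
    · exact fun h => hft' _ _ h.symm hab.symm
    · exact fun h => hab.ne (Sum.inl_injective h)

end CoBipartite

section MissProfile

variable {V ι : Type*}

def HasAnticompleteCut (G : SimpleGraph V) (S : Set V) : Prop :=
  ∃ S₁ ⊆ S, S₁.Nonempty ∧ (S \ S₁).Nonempty ∧ ∀ a ∈ S₁, AnticompleteTo G a (S \ S₁)

def HasCompleteCut (G : SimpleGraph V) (S : Set V) : Prop :=
  ∃ S₁ ⊆ S, S₁.Nonempty ∧ (S \ S₁).Nonempty ∧ ∀ a ∈ S₁, CompleteTo G a (S \ S₁)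

/-- `M a` plays the role of the set of indices `i` such that `a` is nonadjacent to `v i`. -/
structure IsMissProfile (G : SimpleGraph V) (S : Set V) (M : V → Set ι) : Prop where
  nonempty : ∀ a ∈ S, (M a).Nonempty
  disjoint : ∀ ⦃a⦄, a ∈ S → ∀ ⦃b⦄, b ∈ S → a ≠ b → ¬G.Adj a b → Disjoint (M a) (M b)
  eq_of_adj : ∀ ⦃a⦄, a ∈ S → ∀ ⦃b⦄, b ∈ S → ∀ ⦃c⦄, c ∈ S →
    G.Adj a b → ¬G.Adj a c → ¬G.Adj b c → M a = M b

namespace IsMissProfile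

variable {G : SimpleGraph V} {S : Set V} {M : V → Set ι}

theorem mono (hM : IsMissProfile G S M) {T : Set V} (hT : T ⊆ S) : IsMissProfile G T M where
  nonempty a ha := hM.nonempty a (hT ha)
  disjoint _ ha _ hb := hM.disjoint (hT ha) (hT hb)
  eq_of_adj _ ha _ hb _ hc := hM.eq_of_adj (hT ha) (hT hb) (hT hc)

theorem ne_of_not_adj (hM : IsMissProfile G S M) {a b : V} (ha : a ∈ S) (hb : b ∈ S)
    (hab : a ≠ b) (h : ¬G.Adj a b) : M a ≠ M b := fun he =>
  (hM.nonempty a ha).ne_empty (disjoint_self.1 (he ▸ hM.disjoint ha hb hab h))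

theorem adj_of_adj_of_adj (hM : IsMissProfile G S M) {p q r a : V} (hp : p ∈ S) (hq : q ∈ S)
    (hr : r ∈ S) (ha : a ∈ S) (hpq : p ≠ q) (npq : ¬G.Adj p q) (npr : ¬G.Adj p r)
    (nqr : ¬G.Adj q r) (hap : G.Adj a p) (haq : G.Adj a q) : G.Adj a r := by
  by_contra har
  exact hM.ne_of_not_adj hp hq hpq npq <|
    (hM.eq_of_adj hp ha hr hap.symm npr har).trans (hM.eq_of_adj ha hq hr haq har nqr)

theorem adj_of_adj_privateNeighbor (hM : IsMissProfile G S M) {x y z p h : V} (hx : x ∈ S)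
    (hy : y ∈ S) (hz : z ∈ S) (hxy : x ≠ y) (hxz : x ≠ z) (hyz : y ≠ z) (nxy : ¬G.Adj x y)
    (nxz : ¬G.Adj x z) (nyz : ¬G.Adj y z) (hp : p ∈ S)
    (hpP : p = x ∨ (G.Adj p x ∧ ¬G.Adj p y ∧ ¬G.Adj p z)) (hh : h ∈ S)
    (hhP : ¬(h = x ∨ (G.Adj h x ∧ ¬G.Adj h y ∧ ¬G.Adj h z))) (hhp : G.Adj h p) :
    G.Adj h x ∧ G.Adj h y ∧ G.Adj h z := by
  push Not at hhP
  obtain ⟨hhx_ne, hhP⟩ := hhP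
  by_cases hhx : G.Adj h x
  · by_cases hhy : G.Adj h y
    · exact ⟨hhx, hhy, hM.adj_of_adj_of_adj hx hy hz hh hxy nxy nxz nyz hhx hhy⟩
    · have hhz := hhP hhx hhy
      exact ⟨hhx, hM.adj_of_adj_of_adj hx hz hy hh hxz nxz nxy (fun h => nyz h.symm) hhx hhz,
        hhz⟩
  · obtain ⟨hpx, npy, npz⟩ := hpP.resolve_left (by rintro rfl; exact hhx hhp)
    have hhy : G.Adj h y := by
      by_contra nhy
      exact hM.ne_of_not_adj hh hx hhx_ne hhx
        ((hM.eq_of_adj hx hp hy hpx.symm nxy npy).trans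
          (hM.eq_of_adj hp hh hy hhp.symm npy nhy)).symm
    have hhz := hM.adj_of_adj_of_adj hp hy hz hh (by rintro rfl; exact nxy hpx.symm) npy npz nyz
      hhp hhy
    exact absurd (hM.adj_of_adj_of_adj hy hz hx hh hyz nyz (fun h => nxy h.symm)
      (fun h => nxz h.symm) hhy hhz) hhx

theorem false_of_indep_triple (hM : IsMissProfile G S M) (hsplit : ¬HasAnticompleteCut G S)
    (hjoin : ¬HasCompleteCut G S) {x y z : V} (hx : x ∈ S) (hy : y ∈ S) (hz : z ∈ S)
    (hxy : x ≠ y) (hxz : x ≠ z) (hyz : y ≠ z) (nxy : ¬G.Adj x y) (nxz : ¬G.Adj x z)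
    (nyz : ¬G.Adj y z) : False := by
  -- `P` is `x` with its private neighbours, `D` the rest of the neighbourhood of `P`. If `D` is
  -- empty, `P` is a union of components of `G[S]`; otherwise `D` is complete to `S \ D`.
  set P : Set V := {a ∈ S | a = x ∨ (G.Adj a x ∧ ¬G.Adj a y ∧ ¬G.Adj a z)}
  set D : Set V := {h ∈ S \ P | ∃ p ∈ P, G.Adj h p}
  have hxP : x ∈ P := ⟨hx, Or.inl rfl⟩
  have hD : ∀ h ∈ D, G.Adj h x ∧ G.Adj h y ∧ G.Adj h z := fun h ⟨⟨hh, hhP⟩, p, hp, hhp⟩ =>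
    hM.adj_of_adj_privateNeighbor hx hy hz hxy hxz hyz nxy nxz nyz hp.1 hp.2 hh
      (fun h' => hhP ⟨hh, h'⟩) hhp
  rcases D.eq_empty_or_nonempty with hD₀ | hDne
  · refine hsplit ⟨P, fun a ha => ha.1, ⟨x, hxP⟩, ⟨y, hy, ?_⟩, fun a ha w hw haw => ?_⟩
    · rintro ⟨-, rfl | ⟨hyx, -⟩⟩
      exacts [hxy rfl, nxy hyx.symm]
    · exact hD₀.subset ⟨hw, a, ha, haw.symm⟩
  refine hjoin ⟨D, fun h hh => hh.1.1, hDne, ⟨x, hx, fun hxD => hxD.1.2 hxP⟩, fun h hh w hw => ?_⟩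
  obtain ⟨hhx, hhy, hhz⟩ := hD h hh
  by_cases hwP : w ∈ P
  · rcases hwP.2 with rfl | ⟨-, nwy, nwz⟩
    · exact hhx
    · exact hM.adj_of_adj_of_adj hy hz hw.1 hh.1.1 hyz nyz (fun h => nwy h.symm)
        (fun h => nwz h.symm) hhy hhz
  -- `w` sees nothing of `P`; were `h` and `w` nonadjacent, `M x = M h = M y` or `M z` would follow
  have nwx : ¬G.Adj w x := fun hwx => hw.2 ⟨⟨hw.1, hwP⟩, x, hxP, hwx⟩
  have nwyz : ¬G.Adj w y ∨ ¬G.Adj w z := by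
    by_contra! ⟨hwy, hwz⟩
    exact nwx (hM.adj_of_adj_of_adj hy hz hx hw.1 hyz nyz (fun h => nxy h.symm)
      (fun h => nxz h.symm) hwy hwz)
  by_contra nhw
  have hxh := hM.eq_of_adj hx hh.1.1 hw.1 hhx.symm (fun h => nwx h.symm) nhw
  rcases nwyz with nwy | nwz
  · exact hM.ne_of_not_adj hx hy hxy nxy
      (hxh.trans (hM.eq_of_adj hh.1.1 hy hw.1 hhy nhw fun h => nwy h.symm))
  · exact hM.ne_of_not_adj hx hz hxz nxz
      (hxh.trans (hM.eq_of_adj hh.1.1 hz hw.1 hhz nhw fun h => nwz h.symm))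

theorem exists_isClique_union_eq (hM : IsMissProfile G S M) (hsplit : ¬HasAnticompleteCut G S)
    (hjoin : ¬HasCompleteCut G S) :
    ∃ K₁ K₂ : Set V, Disjoint K₁ K₂ ∧ K₁ ∪ K₂ = S ∧ G.IsClique K₁ ∧ G.IsClique K₂ := by
  rcases S.eq_empty_or_nonempty with rfl | ⟨a, ha⟩
  · exact ⟨∅, ∅, by simp⟩
  set K₁ : Set V := {s ∈ S | M s = M a}
  set K₂ : Set V := {s ∈ S | ∃ w ∈ K₁, w ≠ s ∧ ¬G.Adj w s}
  have hK₂ : ∀ b ∈ K₂, ∀ c ∈ S, c ≠ b → ¬G.Adj b c → c ∈ K₁ := by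
    rintro b ⟨hb, w, ⟨hw, hwa⟩, hwb, nwb⟩ c hc hcb nbc
    refine ⟨hc, ?_⟩
    by_cases hcw : c = w
    · rw [hcw, hwa]
    by_cases hwc : G.Adj w c
    · exact (hM.eq_of_adj hw hc hb hwc nwb fun h => nbc h.symm).symm.trans hwa
    · exact (hM.false_of_indep_triple hsplit hjoin hw hb hc hwb (Ne.symm hcw) hcb.symm nwb hwc
        nbc).elim
  have hK₁ : G.IsClique K₁ := fun s hs t ht hst =>
    by_contra fun h => hM.ne_of_not_adj hs.1 ht.1 hst h (hs.2.trans ht.2.symm)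
  have hdisj : Disjoint K₁ K₂ := Set.disjoint_left.2 fun s hs ⟨_, w, hw, hws, nws⟩ =>
    nws (hK₁ hw hs hws)
  refine ⟨K₁, K₂, hdisj, ?_, hK₁, fun b hb c hc hbc => by_contra fun h =>
    Set.disjoint_left.1 hdisj (hK₂ b hb c hc.1 hbc.symm h) hc⟩
  -- otherwise `K₁ ∪ K₂` would be complete to the rest of `S`
  have hsub : K₁ ∪ K₂ ⊆ S := Set.union_subset (fun s hs => hs.1) fun s hs => hs.1
  refine hsub.antisymm fun y hy => by_contra fun hyK => hjoin ⟨K₁ ∪ K₂, hsub,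
    ⟨a, Or.inl ⟨ha, rfl⟩⟩, ⟨y, hy, hyK⟩, fun s hs y' hy' => by_contra fun nsy => ?_⟩
  have hsy : s ≠ y' := fun h => hy'.2 (h ▸ hs)
  rcases hs with hs₁ | hs₂
  · exact hy'.2 (Or.inr ⟨hy'.1, s, hs₁, hsy, nsy⟩)
  · exact hy'.2 (Or.inl (hK₂ s hs₂ y' hy'.1 hsy.symm nsy))

theorem colorable_cliqueNum [Finite V] (hM : IsMissProfile G S M) :
    (G.induce S).Colorable (G.induce S).cliqueNum := by
  induction S using WellFoundedLT.induction with
  | _ S ih =>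
    have hcut : ∀ S₁ ⊆ S, S₁.Nonempty → (S \ S₁).Nonempty →
        (G.induce S₁).Colorable (G.induce S₁).cliqueNum ∧
          (G.induce (S \ S₁)).Colorable (G.induce (S \ S₁)).cliqueNum := fun S₁ hS₁ hne hne' =>
      ⟨ih S₁ ((Set.ssubset_iff_of_subset hS₁).2 hne') (hM.mono hS₁),
        ih _ (sdiff_lt hS₁ hne.ne_empty) (hM.mono Set.sdiff_subset)⟩
    by_cases hsplit : HasAnticompleteCut G S
    · obtain ⟨S₁, hS₁, hne, hne', hanti⟩ := hsplit
      obtain ⟨h₁, h₂⟩ := hcut S₁ hS₁ hne hne'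
      exact colorable_induce_of_anticompleteTo G hanti (h₁.mono (cliqueNum_induce_mono G hS₁))
        (h₂.mono (cliqueNum_induce_mono G Set.sdiff_subset))
    by_cases hjoin : HasCompleteCut G S
    · obtain ⟨S₁, hS₁, hne, hne', hcomp⟩ := hjoin
      obtain ⟨h₁, h₂⟩ := hcut S₁ hS₁ hne hne'
      exact (colorable_induce_add G h₁ h₂).mono (cliqueNum_induce_add_le G hS₁ hcomp)
    obtain ⟨K₁, K₂, hK, rfl, h₁, h₂⟩ := hM.exists_isClique_union_eq hsplit hjoin
    obtain ⟨K₁, rfl⟩ := K₁.toFinite.exists_finset_coe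
    obtain ⟨K₂, rfl⟩ := K₂.toFinite.exists_finset_coe
    exact colorable_cliqueNum_induce_union G (disjoint_coe.1 hK) h₁ h₂

theorem chromaticNumber_eq_cliqueNum [Finite V] (hM : IsMissProfile G S M) :
    (G.induce S).chromaticNumber = (G.induce S).cliqueNum :=
  le_antisymm hM.colorable_cliqueNum.chromaticNumber_le (G.induce S).cliqueNum_le_chromaticNumber

end IsMissProfile

end MissProfile

section Chair

variable {V ι : Type*} {G : SimpleGraph V}

theorem Free.false_of_chair (hfree : _root_.Free G (tBroom 2))
    {u₀ v₁ v₂ u₁ u₂ : V} (h₀₁ : G.Adj u₀ v₁) (h₁₂ : G.Adj v₁ v₂) (h₀₃ : G.Adj u₀ u₁)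
    (h₀₄ : G.Adj u₀ u₂) (n₀₂ : ¬G.Adj u₀ v₂) (n₁₃ : ¬G.Adj v₁ u₁) (n₁₄ : ¬G.Adj v₁ u₂)
    (n₂₃ : ¬G.Adj v₂ u₁) (n₂₄ : ¬G.Adj v₂ u₂) (n₃₄ : ¬G.Adj u₁ u₂) (hne : u₁ ≠ u₂) : False := by
  have hadj : ∀ a b, G.Adj (![u₀, v₁, v₂, u₁, u₂] a) (![u₀, v₁, v₂, u₁, u₂] b) ↔
      (tBroom 2).Adj a b := by
    intro a b
    fin_cases a <;> fin_cases b <;> simp [tBroom, G.adj_comm, *]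
  refine hfree ⟨⟨⟨![u₀, v₁, v₂, u₁, u₂], fun a b hab => ?_⟩, hadj _ _⟩⟩
  fin_cases a <;> fin_cases b <;> simp_all [G.adj_comm]

theorem isMissProfile_of_free (hfree : _root_.Free G (tBroom 2)) (v : ι → V) {w w' : V}
    (hww' : ¬G.Adj w w') (hv : ∀ i, G.Adj (v i) w ∧ G.Adj (v i) w') {S : Set V}
    (hS : ∀ x ∈ S, G.Adj w x ∧ ¬G.Adj x w' ∧ ∃ i, ¬G.Adj x (v i)) :
    IsMissProfile G S fun x => {i | ¬G.Adj x (v i)} := by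
  have hdisj : ∀ a ∈ S, ∀ b ∈ S, a ≠ b → ¬G.Adj a b → ∀ i, ¬G.Adj a (v i) → G.Adj b (v i) :=
    fun a ha b hb hab nab i nai => by_contra fun nbi =>
      -- chair with centre `w`, path `w – v i – w'` and leaves `a`, `b`
      hfree.false_of_chair (hv i).1.symm (hv i).2 (hS a ha).1 (hS b hb).1 hww'
        (fun h => nai h.symm) (fun h => nbi h.symm) (fun h => (hS a ha).2.1 h.symm)
        (fun h => (hS b hb).2.1 h.symm) nab hab
  have hsub : ∀ a ∈ S, ∀ b ∈ S, ∀ c ∈ S, G.Adj a b → ¬G.Adj a c → ¬G.Adj b c →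
      ∀ i, ¬G.Adj a (v i) → ¬G.Adj b (v i) := fun a ha b hb c hc hab nac nbc i nai hbi =>
    have hci := hdisj a ha c hc (by rintro rfl; exact nbc hab.symm) nac i nai
    -- chair with centre `v i`, path `v i – b – a` and leaves `w'`, `c`
    hfree.false_of_chair hbi.symm hab.symm (hv i).2 hci.symm (fun h => nai h.symm)
      (hS b hb).2.1 nbc (hS a ha).2.1 nac (fun h => (hS c hc).2.1 h.symm)
      (by rintro rfl; exact hww' (hS _ hc).1)
  exact {
    nonempty := fun a ha => (hS a ha).2.2
    disjoint := fun a ha b hb hab nab => Set.disjoint_left.2 fun i nai nbi =>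
      nbi (hdisj a ha b hb hab nab i nai)
    eq_of_adj := fun a ha b hb c hc hab nac nbc => Set.ext fun i =>
      ⟨hsub a ha b hb c hc hab nac nbc i, hsub b hb a ha c hc hab.symm nbc nac i⟩ }

theorem not_adj_of_not_completeTo_pair {x w w' : V} (h : ¬CompleteTo G x {w, w'})
    (hw : G.Adj x w) : ¬G.Adj x w' := fun hw' =>
  h fun u hu => by rcases hu with rfl | rfl <;> assumption

theorem exists_not_adj_of_not_completeTo {v : ι → V} {T : Set V} {x : V}
    (h : ¬CompleteTo G x ((Set.range v ∪ T) \ T)) : ∃ i, ¬G.Adj x (v i) := by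
  by_contra! hx
  exact h fun u ⟨hu, huT⟩ => by
    rcases hu with ⟨i, rfl⟩ | hu
    exacts [hx i, absurd hu huT]

end Chair

theorem A_inter_nbr_perfect_general (q : ℕ)
    (V : Type) [Fintype V] (G : SimpleGraph V) (hfree : _root_.Free G (tBroom 2))
    (v : Fin (q - 1) → V) (vq vq' : V)
    (hindepq : ¬ G.Adj vq vq')
    (hcompq : ∀ i, G.Adj (v i) vq ∧ G.Adj (v i) vq') :
    (∀ S : Set V,
        S ⊆ {x ∈ nbhd G (Set.range v ∪ {vq, vq'}) | NeutralTo G x {vq, vq'} ∧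
              ¬ CompleteTo G x ((Set.range v ∪ {vq, vq'}) \ {vq, vq'})} ∩
            G.neighborSet vq →
        (G.induce S).chromaticNumber = ((G.induce S).cliqueNum : ℕ∞)) ∧
      (∀ S : Set V,
        S ⊆ {x ∈ nbhd G (Set.range v ∪ {vq, vq'}) | NeutralTo G x {vq, vq'} ∧
              ¬ CompleteTo G x ((Set.range v ∪ {vq, vq'}) \ {vq, vq'})} ∩
            G.neighborSet vq' →
        (G.induce S).chromaticNumber = ((G.induce S).cliqueNum : ℕ∞)) := by
  refine ⟨fun S hS => ?_, fun S hS => ?_⟩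
  · refine (isMissProfile_of_free hfree v hindepq hcompq fun x hx => ?_
      ).chromaticNumber_eq_cliqueNum
    obtain ⟨⟨-, ⟨hnc, -⟩, hmiss⟩, hvx⟩ := hS hx
    exact ⟨hvx, not_adj_of_not_completeTo_pair hnc hvx.symm, exists_not_adj_of_not_completeTo hmiss⟩
  · refine (isMissProfile_of_free hfree v (fun h => hindepq h.symm) (fun i => (hcompq i).symm)
      fun x hx => ?_).chromaticNumber_eq_cliqueNum
    obtain ⟨⟨-, ⟨hnc, -⟩, hmiss⟩, hvx⟩ := hS hx
    rw [Set.pair_comm] at hnc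
    exact ⟨hvx, not_adj_of_not_completeTo_pair hnc hvx.symm, exists_not_adj_of_not_completeTo hmiss⟩

/-- Lemma 2.5. Let `G` be chair-free, `Q` complete `q`-partite with parts
`V_1 = {v 1}, …, V_{q-1} = {v (q-1)}` singletons and `V_q = {vq, vq'}`, and
`A = {x ∈ N(V(Q)) : x neutral to V_q, not complete to V(Q) \ V_q}`.  Then both
`G[A ∩ N(vq)]` and `G[A ∩ N(vq')]` are perfect: every induced subgraph `H` of either
satisfies `χ(H) = ω(H)`. -/
theorem A_inter_nbr_perfect (q : ℕ) (hq : 2 ≤ q)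
    (V : Type) [Fintype V] (G : SimpleGraph V) (hfree : _root_.Free G (tBroom 2))
    (v : Fin (q - 1) → V) (vq vq' : V) (hne : vq ≠ vq')
    (hinj : Function.Injective v)
    (hdisjq : ∀ i, v i ≠ vq ∧ v i ≠ vq')
    (hindepq : ¬ G.Adj vq vq')
    (hcomp : ∀ i j, i ≠ j → G.Adj (v i) (v j))
    (hcompq : ∀ i, G.Adj (v i) vq ∧ G.Adj (v i) vq') :
    (∀ S : Set V,
        S ⊆ {x ∈ nbhd G (Set.range v ∪ {vq, vq'}) | NeutralTo G x {vq, vq'} ∧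
              ¬ CompleteTo G x ((Set.range v ∪ {vq, vq'}) \ {vq, vq'})} ∩
            G.neighborSet vq →
        (G.induce S).chromaticNumber = ((G.induce S).cliqueNum : ℕ∞)) ∧
      (∀ S : Set V,
        S ⊆ {x ∈ nbhd G (Set.range v ∪ {vq, vq'}) | NeutralTo G x {vq, vq'} ∧
              ¬ CompleteTo G x ((Set.range v ∪ {vq, vq'}) \ {vq, vq'})} ∩
            G.neighborSet vq' →
        (G.induce S).chromaticNumber = ((G.induce S).cliqueNum : ℕ∞)) :=
  A_inter_nbr_perfect_general q V G hfree v vq vq' hindepq hcompq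
end
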